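/- arXiv:2006.16358 — 5 statements merged into one kernel-verified Lean document; each statement's English description precedes it below -/
import Mathlib

section
/- Let n ≥ 1 be an integer and let ψ : ℝ_+ → ℝ_+ be a function with ∑_{q=1}^∞ q^{n−1} ψ(q) < ∞. Then for any κ > 0, the n-dimensional Lebesgue measure of the set B_n(ψ,κ) of all ξ = (ξ_1,…,ξ_n) ∈ (0,1)^n such that |q_1ξ_1 + … + q_nξ_n + p| > κ ψ(|q|_∞) for every (p, q) ∈ ℤ × (ℤ^n \ {0}) is at least 1 − 4nκ ∑_{q=1}^∞ (2q+1)^{n−1} ψ(q). -/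
open MeasureTheory Set
open scoped ENNReal

/-! A point `ξ` of the open unit cube outside `B_n(ψ, κ)` lies in the slab where `q ⬝ ξ` is
within `κ ψ(|q|_∞)` of an integer, for some `q ≠ 0`. Each such slab has measure at most
`2 κ ψ(|q|_∞)`: integrating out a coordinate with `q_i ≠ 0`, the map `t ↦ q_i t + c mod 1`
pushes Lebesgue measure on `(0, 1]` forward to the Haar measure of `ℝ / ℤ`, in which a ball of
radius `δ` has measure at most `2δ`. Since at most
`(2k + 1)^n - (2k - 1)^n ≤ 2n (2k + 1)^(n-1)` vectors `q` have `|q|_∞ = k`, summing over `q`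
bounds the measure of the complement by `4 n κ ∑_k (2k + 1)^(n-1) ψ(k)`. -/

lemma UnitAddCircle.norm_coe_le_abs_add_intCast (x : ℝ) (p : ℤ) :
    ‖(x : UnitAddCircle)‖ ≤ |x + p| := by
  have h : ((x + p : ℝ) : UnitAddCircle) = x := by simp
  rw [← h, ← Real.norm_eq_abs]
  exact QuotientAddGroup.norm_mk_le_norm

lemma volume_Ioo_inter_setOf_abs_add_intCast_le (m : ℤ) (hm : m ≠ 0) (c δ : ℝ) :
    volume {t ∈ Ioo (0 : ℝ) 1 | ∃ p : ℤ, |m * t + c + p| ≤ δ} ≤ ENNReal.ofReal (2 * δ) := by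
  let f : ℝ → UnitAddCircle := fun t => ((m * t + c : ℝ) : UnitAddCircle)
  have hf : MeasurePreserving f (volume.restrict (Ioc 0 1)) volume := by
    have hmk : MeasurePreserving ((↑) : ℝ → UnitAddCircle) (volume.restrict (Ioc 0 1)) volume := by
      simpa using AddCircle.measurePreserving_mk 1 0
    convert (measurePreserving_add_right volume ((c : ℝ) : UnitAddCircle)).comp
      ((Measure.measurePreserving_zsmul volume hm).comp hmk) using 1
    funext t
    simp [f, ← zsmul_eq_mul]
  calc volume {t ∈ Ioo (0 : ℝ) 1 | ∃ p : ℤ, |m * t + c + p| ≤ δ}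
      ≤ volume.restrict (Ioc 0 1) (f ⁻¹' Metric.closedBall 0 δ) := by
        rw [Measure.restrict_apply (hf.measurable measurableSet_closedBall)]
        refine measure_mono ?_
        rintro t ⟨ht, p, hp⟩
        exact ⟨mem_closedBall_zero_iff.mpr
          ((UnitAddCircle.norm_coe_le_abs_add_intCast _ p).trans hp), Ioo_subset_Ioc_self ht⟩
    _ = volume (Metric.closedBall (0 : UnitAddCircle) δ) :=
        hf.measure_preimage measurableSet_closedBall.nullMeasurableSet
    _ ≤ ENNReal.ofReal (2 * δ) := by
        rw [AddCircle.volume_closedBall]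
        exact ENNReal.ofReal_le_ofReal (min_le_right _ _)

def nearIntegerSet {ι : Type*} [Fintype ι] (q : ι → ℤ) (δ : ℝ) : Set (ι → ℝ) :=
  univ.pi (fun _ => Ioo 0 1) ∩ {ξ | ∃ p : ℤ, |∑ i, (q i : ℝ) * ξ i + p| ≤ δ}

lemma measurableSet_nearIntegerSet {ι : Type*} [Fintype ι] (q : ι → ℤ) (δ : ℝ) :
    MeasurableSet (nearIntegerSet q δ) := by
  unfold nearIntegerSet
  refine (MeasurableSet.univ_pi fun _ => measurableSet_Ioo).inter ?_
  rw [ofPred_exists]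
  exact .iUnion fun p => measurableSet_le (by fun_prop) measurable_const

lemma volume_nearIntegerSet_le {n : ℕ} {q : Fin n → ℤ} (hq : q ≠ 0) (δ : ℝ) :
    volume (nearIntegerSet q δ) ≤ ENNReal.ofReal (2 * δ) := by
  obtain ⟨i₀, hi₀⟩ := Function.ne_iff.mp hq
  cases n with
  | zero => exact i₀.elim0
  | succ m =>
  let e := MeasurableEquiv.piFinSuccAbove (fun _ : Fin (m + 1) => ℝ) i₀
  let T := e.symm ⁻¹' nearIntegerSet q δ
  have hT : MeasurableSet T := e.symm.measurable (measurableSet_nearIntegerSet q δ)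
  have hslice (y : Fin m → ℝ) : volume ((fun x => (x, y)) ⁻¹' T) ≤
      (univ.pi fun _ => Ioo (0 : ℝ) 1).indicator (fun _ => ENNReal.ofReal (2 * δ)) y := by
    by_cases hy : y ∈ univ.pi fun _ => Ioo (0 : ℝ) 1
    · rw [indicator_of_mem hy]
      refine le_trans (measure_mono ?_) (volume_Ioo_inter_setOf_abs_add_intCast_le (q i₀) hi₀
        (∑ j, (q (i₀.succAbove j) : ℝ) * y j) δ)
      rintro x ⟨hx, p, hp⟩
      refine ⟨by simpa [e] using hx i₀, p, ?_⟩
      simpa [e, Fin.sum_univ_succAbove _ i₀, add_assoc] using hp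
    · have hempty : (fun x => (x, y)) ⁻¹' T = ∅ :=
        eq_empty_of_forall_notMem fun x ⟨hx, _⟩ =>
          hy fun j _ => by simpa [e] using hx (i₀.succAbove j) trivial
      simp [hempty]
  calc volume (nearIntegerSet q δ) = volume T :=
        ((volume_preserving_piFinSuccAbove _ i₀).symm.measure_preimage_equiv _).symm
    _ = ∫⁻ y, volume ((fun x => (x, y)) ⁻¹' T) := by
        rw [Measure.volume_eq_prod, Measure.prod_apply_symm hT]
    _ ≤ ∫⁻ y, (univ.pi fun _ => Ioo (0 : ℝ) 1).indicator (fun _ => ENNReal.ofReal (2 * δ)) y :=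
        lintegral_mono hslice
    _ = ENNReal.ofReal (2 * δ) := by
        rw [lintegral_indicator_const (.univ_pi fun _ => measurableSet_Ioo), volume_pi_pi]
        simp

section SupNatAbs

variable {ι : Type*} [Fintype ι]

def supNatAbs (q : ι → ℤ) : ℕ := Finset.univ.sup fun i => (q i).natAbs

noncomputable def intBox (ι : Type*) [Fintype ι] [DecidableEq ι] (k : ℕ) : Finset (ι → ℤ) :=
  Fintype.piFinset fun _ => Finset.Icc (-k : ℤ) k

lemma norm_eq_supNatAbs (q : ι → ℤ) : ‖q‖ = supNatAbs q := by
  rw [Pi.norm_def, supNatAbs, ← NNReal.coe_natCast, Nat.cast_finsetSup]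
  simp [NNReal.natCast_natAbs]

lemma supNatAbs_le_iff [DecidableEq ι] {q : ι → ℤ} {k : ℕ} :
    supNatAbs q ≤ k ↔ q ∈ intBox ι k := by
  simp only [supNatAbs, intBox, Finset.sup_le_iff, Finset.mem_univ, true_implies,
    Fintype.mem_piFinset, Finset.mem_Icc]
  exact forall_congr' fun i => by omega

lemma supNatAbs_eq_zero_iff {q : ι → ℤ} : supNatAbs q = 0 ↔ q = 0 := by
  simp [supNatAbs, funext_iff]

lemma supNatAbs_preimage_succ [DecidableEq ι] (k : ℕ) :
    supNatAbs ⁻¹' {k + 1} = (↑(intBox ι (k + 1) \ intBox ι k) : Set (ι → ℤ)) := by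
  ext q
  simp only [mem_preimage, mem_singleton_iff, Finset.coe_sdiff, mem_sdiff, Finset.mem_coe,
    ← supNatAbs_le_iff]
  omega

lemma card_intBox_succ_sdiff_le [DecidableEq ι] (k : ℕ) :
    (intBox ι (k + 1) \ intBox ι k).card ≤
      2 * Fintype.card ι * (2 * (k + 1) + 1) ^ (Fintype.card ι - 1) := by
  have hsub : intBox ι k ⊆ intBox ι (k + 1) := fun q hq =>
    supNatAbs_le_iff.mp ((supNatAbs_le_iff.mpr hq).trans k.le_succ)
  rw [Finset.card_sdiff_of_subset hsub]
  simp only [intBox, Fintype.card_piFinset, Int.card_Icc, Finset.prod_const, Finset.card_univ]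
  grind [abs_pow_sub_pow_le (α := ℤ) (2 * k + 3) (2 * k + 1) (Fintype.card ι)]

lemma tsum_ne_zero_comp_supNatAbs_le (g : ℕ → ℝ≥0∞) :
    ∑' q : {q : ι → ℤ // q ≠ 0}, g (supNatAbs q.1) ≤
      ∑' k : ℕ, ((2 * Fintype.card ι * (2 * (k + 1) + 1) ^ (Fintype.card ι - 1) : ℕ) : ℝ≥0∞) *
        g (k + 1) := by
  classical
  let G := ({0}ᶜ : Set (ι → ℤ)).indicator (g ∘ supNatAbs)
  have hfiber_zero : ∑' q : supNatAbs ⁻¹' {0}, G q.1 = 0 :=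
    ENNReal.tsum_eq_zero.mpr fun q => by simp [G, supNatAbs_eq_zero_iff.mp q.2]
  have hfiber_succ (k : ℕ) : ∑' q : supNatAbs ⁻¹' {k + 1}, G q.1
      ≤ ((2 * Fintype.card ι * (2 * (k + 1) + 1) ^ (Fintype.card ι - 1) : ℕ) : ℝ≥0∞) * g (k + 1) :=
    calc ∑' q : supNatAbs ⁻¹' {k + 1}, G q.1
        ≤ ∑' _ : supNatAbs ⁻¹' {k + 1}, g (k + 1) :=
          ENNReal.tsum_le_tsum fun q => (indicator_le_self _ _ _).trans_eq (congrArg g q.2)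
      _ = (intBox ι (k + 1) \ intBox ι k).card • g (k + 1) := by
          rw [supNatAbs_preimage_succ, Finset.tsum_subtype' _ fun _ => g (k + 1), Finset.sum_const]
      _ ≤ _ := by
          rw [← nsmul_eq_mul]
          exact nsmul_le_nsmul_left (by simp) (card_intBox_succ_sdiff_le k)
  calc ∑' q : {q : ι → ℤ // q ≠ 0}, g (supNatAbs q.1)
      = ∑' q, G q := tsum_subtype ({0}ᶜ : Set (ι → ℤ)) (g ∘ supNatAbs)
    _ = ∑' k, ∑' q : supNatAbs ⁻¹' {k}, G q.1 := (ENNReal.tsum_fiberwise _ _).symm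
    _ = ∑' k, ∑' q : supNatAbs ⁻¹' {k + 1}, G q.1 := by
        rw [tsum_eq_zero_add' ENNReal.summable, hfiber_zero, zero_add]
    _ ≤ _ := ENNReal.tsum_le_tsum hfiber_succ

end SupNatAbs

lemma summable_two_mul_succ_add_one_pow_mul {f : ℕ → ℝ} (hf : ∀ k, 0 ≤ f k) (d : ℕ)
    (h : Summable fun k : ℕ => ((k + 1 : ℕ) : ℝ) ^ d * f k) :
    Summable fun k : ℕ => ((2 * (k + 1) + 1 : ℕ) : ℝ) ^ d * f k := by
  refine .of_nonneg_of_le (fun k => by have := hf k; positivity) (fun k => ?_) (h.mul_left (3 ^ d))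
  rw [← mul_assoc, ← mul_pow]
  gcongr
  · exact hf k
  · push_cast; linarith

lemma volume_iUnion_nearIntegerSet_le {n : ℕ} {ψ : ℝ → ℝ} (hψ : ∀ k : ℕ, 0 ≤ ψ k) {κ : ℝ}
    (hκ : 0 ≤ κ)
    (hsum : Summable fun k : ℕ => ((2 * (k + 1) + 1 : ℕ) : ℝ) ^ (n - 1) * ψ ((k + 1 : ℕ) : ℝ)) :
    volume (⋃ q : {q : Fin n → ℤ // q ≠ 0}, nearIntegerSet q.1 (κ * ψ ‖q.1‖)) ≤
      ENNReal.ofReal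
        (4 * n * κ * ∑' k : ℕ, ((2 * (k + 1) + 1 : ℕ) : ℝ) ^ (n - 1) * ψ ((k + 1 : ℕ) : ℝ)) :=
  calc volume (⋃ q : {q : Fin n → ℤ // q ≠ 0}, nearIntegerSet q.1 (κ * ψ ‖q.1‖))
      ≤ ∑' q : {q : Fin n → ℤ // q ≠ 0}, volume (nearIntegerSet q.1 (κ * ψ ‖q.1‖)) :=
        measure_iUnion_le _
    _ ≤ ∑' q : {q : Fin n → ℤ // q ≠ 0}, ENNReal.ofReal (2 * (κ * ψ (supNatAbs q.1))) :=
        ENNReal.tsum_le_tsum fun q => norm_eq_supNatAbs q.1 ▸ volume_nearIntegerSet_le q.2 _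
    _ ≤ ∑' k : ℕ, ((2 * n * (2 * (k + 1) + 1) ^ (n - 1) : ℕ) : ℝ≥0∞) *
          ENNReal.ofReal (2 * (κ * ψ ((k + 1 : ℕ) : ℝ))) := by
        simpa using tsum_ne_zero_comp_supNatAbs_le (ι := Fin n)
          fun k => ENNReal.ofReal (2 * (κ * ψ k))
    _ = ∑' k : ℕ, ENNReal.ofReal
          (4 * n * κ * (((2 * (k + 1) + 1 : ℕ) : ℝ) ^ (n - 1) * ψ ((k + 1 : ℕ) : ℝ))) := by
        refine tsum_congr fun k => ?_
        have := hψ (k + 1)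
        rw [← ENNReal.ofReal_natCast, ← ENNReal.ofReal_mul (by positivity)]
        push_cast
        ring_nf
    _ = _ := by
        rw [← ENNReal.ofReal_tsum_of_nonneg (fun k => by have := hψ (k + 1); positivity)
          (hsum.mul_left _), tsum_mul_left]

theorem stmt1_general (n : ℕ) (ψ : ℝ → ℝ) (hψ : ∀ x : ℝ, 0 ≤ x → 0 ≤ ψ x)
    (hsum : Summable fun q : ℕ => ((q + 1 : ℕ) : ℝ) ^ (n - 1) * ψ ((q + 1 : ℕ) : ℝ))
    (κ : ℝ) (hκ : 0 < κ) :
    ENNReal.ofReal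
        (1 - 4 * n * κ *
          ∑' q : ℕ, ((2 * (q + 1) + 1 : ℕ) : ℝ) ^ (n - 1) * ψ ((q + 1 : ℕ) : ℝ)) ≤
      volume {ξ : Fin n → ℝ |
        (∀ i, ξ i ∈ Set.Ioo (0 : ℝ) 1) ∧
        ∀ (p : ℤ) (q : Fin n → ℤ), q ≠ 0 →
          κ * ψ ‖q‖ < |∑ i, (q i : ℝ) * ξ i + (p : ℝ)|} := by
  set T := ∑' q : ℕ, ((2 * (q + 1) + 1 : ℕ) : ℝ) ^ (n - 1) * ψ ((q + 1 : ℕ) : ℝ)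
  set B := {ξ : Fin n → ℝ | (∀ i, ξ i ∈ Set.Ioo (0 : ℝ) 1) ∧
    ∀ (p : ℤ) (q : Fin n → ℤ), q ≠ 0 → κ * ψ ‖q‖ < |∑ i, (q i : ℝ) * ξ i + (p : ℝ)|}
  set E := ⋃ q : {q : Fin n → ℤ // q ≠ 0}, nearIntegerSet q.1 (κ * ψ ‖q.1‖)
  have hψ_nat (k : ℕ) : 0 ≤ ψ k := hψ _ k.cast_nonneg
  have hcover : univ.pi (fun _ => Ioo (0 : ℝ) 1) ⊆ B ∪ E := by
    intro ξ hξ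
    by_cases hB : ξ ∈ B
    · exact Or.inl hB
    simp only [B, mem_ofPred_eq, not_and, not_forall, not_lt] at hB
    obtain ⟨p, q, hq, hle⟩ := hB fun i => hξ i trivial
    exact Or.inr (mem_iUnion.mpr ⟨⟨q, hq⟩, hξ, p, hle⟩)
  have hE : volume E ≤ ENNReal.ofReal (4 * n * κ * T) :=
    volume_iUnion_nearIntegerSet_le hψ_nat hκ.le
      (summable_two_mul_succ_add_one_pow_mul (fun k => hψ_nat _) _ hsum)
  have hcompl : 1 ≤ volume B + ENNReal.ofReal (4 * n * κ * T) :=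
    calc 1 = volume (univ.pi fun _ : Fin n => Ioo (0 : ℝ) 1) := by simp [volume_pi_pi]
      _ ≤ volume B + volume E := (measure_mono hcover).trans (measure_union_le _ _)
      _ ≤ _ := by gcongr
  have hT_nonneg : 0 ≤ T := tsum_nonneg fun k => mul_nonneg (by positivity) (hψ_nat _)
  rw [ENNReal.ofReal_sub _ (by positivity), ENNReal.ofReal_one]
  exact tsub_le_iff_right.mpr hcompl

/-- (Effective convergence Khintchine–Groshev for one linear form.)
If `∑_{q≥1} q^(n-1) ψ(q) < ∞` then for any `κ > 0` the Lebesgue measure of the set of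
`ξ ∈ (0,1)^n` with `|q₁ξ₁ + ⋯ + qₙξₙ + p| > κ ψ(|q|_∞)` for all `(p, q) ∈ ℤ × (ℤⁿ \ {0})`
is at least `1 - 4 n κ ∑_{q≥1} (2q+1)^(n-1) ψ(q)`. -/
theorem stmt1 (n : ℕ) (hn : 1 ≤ n) (ψ : ℝ → ℝ) (hψ : ∀ x : ℝ, 0 ≤ x → 0 ≤ ψ x)
    (hsum : Summable fun q : ℕ => ((q + 1 : ℕ) : ℝ) ^ (n - 1) * ψ ((q + 1 : ℕ) : ℝ))
    (κ : ℝ) (hκ : 0 < κ) :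
    ENNReal.ofReal
        (1 - 4 * n * κ *
          ∑' q : ℕ, ((2 * (q + 1) + 1 : ℕ) : ℝ) ^ (n - 1) * ψ ((q + 1 : ℕ) : ℝ)) ≤
      volume {ξ : Fin n → ℝ |
        (∀ i, ξ i ∈ Set.Ioo (0 : ℝ) 1) ∧
        ∀ (p : ℤ) (q : Fin n → ℤ), q ≠ 0 →
          κ * ψ ‖q‖ < |∑ i, (q i : ℝ) * ξ i + (p : ℝ)|} :=
  stmt1_general n ψ hψ hsum κ hκ
end

section
/- Let n, m ≥ 1 be integers and let ψ : ℝ_+ → ℝ_+ be a function such that ∑_{q=1}^∞ q^{n−1} ψ(q)^m < ∞. Then for Lebesgue-almost every n×m real matrix Ξ with column vectors ξ_1,…,ξ_m ∈ ℝ^n there exists a constant κ(Ξ) > 0 such that max_{1≤j≤m} |q_1ξ_{1,j} + … + q_nξ_{n,j} + p_j| > κ(Ξ) ψ(|q|_∞) for all (p, q) ∈ ℤ^m × (ℤ^n \ {0}). -/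
/-!
Borel–Cantelli. Call `(p, q)` with `q ≠ 0` a `ψ`-approximation of `Ξ` (an element of
`approxPairs ψ Ξ`) if `|q₁ξ_{1j} + ⋯ + qₙξ_{nj} + pⱼ| ≤ ψ(|q|_∞)` for every column `j`.
Inside the cube `[-T, T]^{nm}`, the matrices having a given `(p, q)` as a `ψ`-approximation
form a slab of volume `≪ (ψ(|q|)/|q|)^m`: left multiplication by the identity matrix with its
row of the largest `|qᵢ|` replaced by `q` maps it into a box. Only `≪ |q|^m` vectors `p` give a
nonempty slab, and `≪ k^{n-1}` vectors `q` have `|q|_∞ = k`, so the total volume is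
`≪ ∑ k^{n-1} ψ(k)^m < ∞`, and almost every `Ξ` has only finitely many `ψ`-approximations.
None of these is an exact relation, since all its multiples would be `ψ`-approximations as
well; so a small `κ ≤ 1` beats the finitely many of them, and every other `(p, q)` already
misses `ψ(|q|)` in some column.
-/

open MeasureTheory Finset Filter Topology
open scoped ENNReal

section IntegerPoints

variable {ι : Type*} [Fintype ι] [DecidableEq ι]

lemma mem_piFinset_Icc_iff_norm_le {N : ℕ} {q : ι → ℤ} :
    q ∈ Fintype.piFinset (fun _ => Icc (-N : ℤ) N) ↔ ‖q‖ ≤ N := by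
  simp only [Fintype.mem_piFinset, mem_Icc, pi_norm_le_iff_of_nonneg (Nat.cast_nonneg N),
    Int.norm_eq_abs, ← abs_le]
  exact forall_congr' fun i => by exact_mod_cast Iff.rfl

lemma exists_subset_piFinset_Icc (t : Finset (ι → ℤ)) :
    ∃ N : ℕ, t ⊆ Fintype.piFinset (fun _ => Icc (-N : ℤ) N) :=
  ⟨⌈∑ q ∈ t, ‖q‖⌉₊, fun _ hq => mem_piFinset_Icc_iff_norm_le.2 <|
    (single_le_sum (fun q _ => norm_nonneg q) hq).trans (Nat.le_ceil _)⟩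

lemma piFinset_Icc_mono : Monotone fun N : ℕ => Fintype.piFinset fun _ : ι => Icc (-N : ℤ) N :=
  fun _ _ h => Fintype.piFinset_subset _ _ fun _ => Icc_subset_Icc (by omega) (by omega)

lemma card_piFinset_Icc (N : ℕ) :
    #(Fintype.piFinset fun _ : ι => Icc (-N : ℤ) N) = (2 * N + 1) ^ Fintype.card ι := by
  rw [Fintype.card_piFinset, prod_const, card_univ, Int.card_Icc]
  congr 1
  omega

lemma norm_eq_of_mem_piFinset_Icc_sdiff {k : ℕ} {q : ι → ℤ}
    (hq : q ∈ Fintype.piFinset (fun _ => Icc (-(k + 1 : ℕ) : ℤ) (k + 1 : ℕ)) \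
      Fintype.piFinset (fun _ => Icc (-k : ℤ) k)) : ‖q‖ = (k + 1 : ℕ) := by
  rw [Finset.mem_sdiff, mem_piFinset_Icc_iff_norm_le, mem_piFinset_Icc_iff_norm_le] at hq
  refine hq.1.antisymm ?_
  obtain ⟨i, hi⟩ : ∃ i, (k : ℤ) < |q i| := by
    by_contra! h
    exact hq.2 (mem_piFinset_Icc_iff_norm_le.1 (Fintype.mem_piFinset.2 fun i =>
      Finset.mem_Icc.2 (abs_le.1 (h i))))
  have hi' : ((k + 1 : ℕ) : ℝ) ≤ ‖q i‖ := by
    rw [Int.norm_eq_abs]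
    exact_mod_cast (by omega : ((k + 1 : ℕ) : ℤ) ≤ |q i|)
  exact hi'.trans (norm_le_pi_norm q i)

lemma card_piFinset_Icc_sdiff_le (k : ℕ) :
    #(Fintype.piFinset (fun _ : ι => Icc (-(k + 1 : ℕ) : ℤ) (k + 1 : ℕ)) \
      Fintype.piFinset (fun _ => Icc (-k : ℤ) k)) ≤
      2 * Fintype.card ι * (3 * (k + 1)) ^ (Fintype.card ι - 1) := by
  rw [card_sdiff_of_subset (piFinset_Icc_mono k.le_succ), card_piFinset_Icc, card_piFinset_Icc,
    show 2 * (k + 1) + 1 = 2 * k + 3 by ring]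
  have hle : (2 * k + 1) ^ Fintype.card ι ≤ (2 * k + 3) ^ Fintype.card ι :=
    Nat.pow_le_pow_left (by omega) _
  have h3 : (2 * k + 3) ^ (Fintype.card ι - 1) ≤ (3 * (k + 1)) ^ (Fintype.card ι - 1) :=
    Nat.pow_le_pow_left (by omega) _
  have hdiff : (2 * k + 3 : ℤ) ^ Fintype.card ι - (2 * k + 1) ^ Fintype.card ι ≤
      2 * Fintype.card ι * (2 * k + 3) ^ (Fintype.card ι - 1) := by
    have h := (le_abs_self _).trans
      (abs_pow_sub_pow_le (2 * k + 3 : ℤ) (2 * k + 1) (Fintype.card ι))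
    rwa [abs_of_nonneg (by positivity : (0 : ℤ) ≤ 2 * k + 3),
      abs_of_nonneg (by positivity : (0 : ℤ) ≤ 2 * k + 1), max_eq_left (by omega),
      show (2 * k + 3 - (2 * k + 1) : ℤ) = 2 by ring] at h
  zify [hle] at h3 ⊢
  nlinarith

lemma tsum_comp_norm_le (f : ℝ → ℝ≥0∞) :
    ∑' q : ι → ℤ, f ‖q‖ ≤ f 0 + 2 * Fintype.card ι * 3 ^ (Fintype.card ι - 1) *
      ∑' k : ℕ, ((k + 1 : ℕ) : ℝ≥0∞) ^ (Fintype.card ι - 1) * f ((k + 1 : ℕ) : ℝ) := by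
  set s : ℕ → Finset (ι → ℤ) := fun N => Fintype.piFinset fun _ => Icc (-N : ℤ) N
  have hs0 : s 0 = {0} := by ext; simp [s, funext_iff]
  rw [ENNReal.tsum_eq_iSup_sum' s exists_subset_piFinset_Icc]
  refine iSup_le fun N => ?_
  rw [sum_eq_sum_range_sdiff s piFinset_Icc_mono, hs0, sum_singleton, norm_zero]
  gcongr
  calc ∑ k ∈ range N, ∑ q ∈ s (k + 1) \ s k, f ‖q‖
      = ∑ k ∈ range N, #(s (k + 1) \ s k) * f ((k + 1 : ℕ) : ℝ) := by
        refine sum_congr rfl fun k _ => ?_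
        rw [sum_congr rfl fun q hq => by rw [norm_eq_of_mem_piFinset_Icc_sdiff hq], sum_const,
          nsmul_eq_mul]
    _ ≤ ∑ k ∈ range N, (2 * Fintype.card ι * 3 ^ (Fintype.card ι - 1)) *
          (((k + 1 : ℕ) : ℝ≥0∞) ^ (Fintype.card ι - 1) * f ((k + 1 : ℕ) : ℝ)) := by
        refine sum_le_sum fun k _ => ?_
        rw [← mul_assoc]
        gcongr ?_ * _
        rw [mul_assoc, ← mul_pow]
        exact_mod_cast card_piFinset_Icc_sdiff_le k
    _ ≤ _ := by
        rw [← mul_sum]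
        exact mul_le_mul_right (ENNReal.sum_le_tsum _) _

end IntegerPoints

lemma Matrix.det_updateRow_one {ι R : Type*} [Fintype ι] [DecidableEq ι] [CommRing R] (i₀ : ι)
    (q : ι → R) : ((1 : Matrix ι ι R).updateRow i₀ q).det = q i₀ := by
  have hq : ∑ k, q k • (1 : Matrix ι ι R) k = q := by ext; simp [Matrix.one_apply]
  simpa [hq] using Matrix.det_updateRow_sum (1 : Matrix ι ι R) i₀ q

section Slab

variable {ι κ : Type*} [Fintype ι] [Fintype κ]

lemma det_mulLeftLinearMap [DecidableEq ι] {R : Type*} [CommRing R] (M : Matrix ι ι R) :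
    LinearMap.det (mulLeftLinearMap κ R M) = M.det ^ Fintype.card κ := by
  let e : (κ → ι → R) ≃ₗ[R] Matrix ι κ R :=
    { Equiv.piComm _ with map_add' := fun _ _ => rfl, map_smul' := fun _ _ => rfl }
  have : mulLeftLinearMap κ R M =
      e.toLinearMap ∘ₗ (LinearMap.pi fun j => M.toLin' ∘ₗ LinearMap.proj j) ∘ₗ
        e.symm.toLinearMap :=
    rfl
  rw [this, LinearMap.det_conj, LinearMap.det_pi]
  simp [LinearMap.det_toLin']

lemma prod_volume_update_Icc [DecidableEq ι] (i₀ : ι) (a b T : ℝ) :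
    ∏ i, volume (Function.update (fun _ => Set.Icc (-T) T) i₀ (Set.Icc a b) i) =
      ENNReal.ofReal (b - a) * ENNReal.ofReal (2 * T) ^ (Fintype.card ι - 1) := by
  have hvol (i : ι) : volume (Function.update (fun _ => Set.Icc (-T) T) i₀ (Set.Icc a b) i) =
      Function.update (fun _ => ENNReal.ofReal (2 * T)) i₀ (ENNReal.ofReal (b - a)) i := by
    rcases eq_or_ne i i₀ with rfl | hi
    · simp only [Function.update_self, Real.volume_Icc]
    · simp only [Function.update_of_ne hi, Real.volume_Icc]
      ring_nf
  simp_rw [hvol, prod_update_of_mem (mem_univ i₀), prod_const,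
    card_sdiff_of_subset (singleton_subset_iff.2 (mem_univ i₀)), card_univ, card_singleton]

lemma volume_slab_le (q : ι → ℝ) {i₀ : ι} (hq : q i₀ ≠ 0) (p : κ → ℝ) (δ T : ℝ) :
    volume {Ξ : ι → κ → ℝ | (∀ j, |∑ i, q i * Ξ i j + p j| ≤ δ) ∧ ∀ i j, |Ξ i j| ≤ T} ≤
      ENNReal.ofReal (2 * δ / |q i₀|) ^ Fintype.card κ *
        ENNReal.ofReal (2 * T) ^ ((Fintype.card ι - 1) * Fintype.card κ) := by
  classical
  -- `G Ξ` is `Ξ` with its row `i₀` replaced by `∑ i, q i • Ξ i`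
  let G : (ι → κ → ℝ) →ₗ[ℝ] (ι → κ → ℝ) :=
    mulLeftLinearMap κ ℝ ((1 : Matrix ι ι ℝ).updateRow i₀ q)
  have hG : LinearMap.det G = q i₀ ^ Fintype.card κ :=
    (det_mulLeftLinearMap _).trans (by rw [Matrix.det_updateRow_one])
  let I (j : κ) : ι → Set ℝ :=
    Function.update (fun _ => Set.Icc (-T) T) i₀ (Set.Icc (-p j - δ) (-p j + δ))
  have hsub : {Ξ : ι → κ → ℝ | (∀ j, |∑ i, q i * Ξ i j + p j| ≤ δ) ∧ ∀ i j, |Ξ i j| ≤ T} ⊆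
      G ⁻¹' Set.univ.pi fun i => Set.univ.pi fun j => I j i := by
    rintro Ξ ⟨hslab, hbox⟩ i - j -
    change (((1 : Matrix ι ι ℝ).updateRow i₀ q) * Matrix.of Ξ) i j ∈ I j i
    rw [Matrix.updateRow_mul, Matrix.one_mul]
    rcases eq_or_ne i i₀ with rfl | hi
    · simp only [I, Matrix.updateRow_self, Function.update_self, Matrix.vecMul, dotProduct,
        Matrix.of_apply, Set.mem_Icc]
      constructor <;> linarith [abs_le.1 (hslab j)]
    · simpa [I, hi, abs_le] using hbox i j
  calc _ ≤ volume (G ⁻¹' Set.univ.pi fun i => Set.univ.pi fun j => I j i) := measure_mono hsub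
    _ = ENNReal.ofReal |(q i₀ ^ Fintype.card κ)⁻¹| * ∏ j, ∏ i, volume (I j i) := by
      rw [Measure.addHaar_preimage_linearMap _ (hG ▸ pow_ne_zero _ hq), hG, volume_pi_pi]
      simp_rw [volume_pi_pi]
      rw [Finset.prod_comm]
    _ = _ := by
      simp_rw [I, prod_volume_update_Icc, show ∀ j, -p j + δ - (-p j - δ) = 2 * δ from
        fun j => by ring]
      rw [prod_const, card_univ, abs_inv, abs_pow, ← inv_pow,
        ENNReal.ofReal_pow (by positivity), mul_pow, ← mul_assoc, ← mul_pow,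
        ← ENNReal.ofReal_mul (by positivity), inv_mul_eq_div, ← pow_mul]

lemma abs_le_of_abs_sum_mul_add_le {q : ι → ℤ} {i₀ : ι} (hi₀ : ∀ i, |q i| ≤ |q i₀|)
    {x : ι → ℝ} {a : ℤ} {δ T : ℝ} (hslab : |∑ i, (q i : ℝ) * x i + a| ≤ δ)
    (hbox : ∀ i, |x i| ≤ T) : |(a : ℝ)| ≤ δ + Fintype.card ι * |(q i₀ : ℝ)| * T := by
  have hsum : |∑ i, (q i : ℝ) * x i| ≤ Fintype.card ι * |(q i₀ : ℝ)| * T := by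
    calc |∑ i, (q i : ℝ) * x i| ≤ ∑ i, |(q i : ℝ)| * |x i| := by
          simpa only [abs_mul] using abs_sum_le_sum_abs (fun i => (q i : ℝ) * x i) univ
      _ ≤ ∑ _i : ι, |(q i₀ : ℝ)| * T := by
          refine sum_le_sum fun i _ => mul_le_mul ?_ (hbox i) (abs_nonneg _) (abs_nonneg _)
          exact_mod_cast hi₀ i
      _ = _ := by simp [mul_assoc]
  calc |(a : ℝ)| = |(∑ i, (q i : ℝ) * x i + a) - ∑ i, (q i : ℝ) * x i| := by ring_nf
    _ ≤ _ := (abs_sub _ _).trans (add_le_add hslab hsum)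

lemma tsum_volume_slab_le {q : ι → ℤ} (hq : q ≠ 0) {δ T : ℝ} (hδ : 0 ≤ δ) (hT : 0 ≤ T) :
    ∑' p : κ → ℤ, volume {Ξ : ι → κ → ℝ |
        (∀ j, |∑ i, (q i : ℝ) * Ξ i j + p j| ≤ δ) ∧ ∀ i j, |Ξ i j| ≤ T} ≤
      ENNReal.ofReal (2 * (2 * δ + 2 * Fintype.card ι * T + 1) * δ) ^ Fintype.card κ *
        ENNReal.ofReal (2 * T) ^ ((Fintype.card ι - 1) * Fintype.card κ) := by
  classical
  obtain ⟨i, hi⟩ := Function.ne_iff.1 hq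
  have : Nonempty ι := ⟨i⟩
  obtain ⟨i₀, hi₀⟩ := Finite.exists_max fun i => |q i|
  have hk : (1 : ℝ) ≤ |(q i₀ : ℝ)| := by exact_mod_cast (Int.one_le_abs hi).trans (hi₀ i)
  have hq₀ : (q i₀ : ℝ) ≠ 0 := abs_pos.1 (one_pos.trans_le hk)
  set R := δ + Fintype.card ι * |(q i₀ : ℝ)| * T
  have hP : ∀ p ∉ Fintype.piFinset fun _ : κ => Icc (-⌊R⌋₊ : ℤ) ⌊R⌋₊, {Ξ : ι → κ → ℝ |
      (∀ j, |∑ i, (q i : ℝ) * Ξ i j + p j| ≤ δ) ∧ ∀ i j, |Ξ i j| ≤ T} = ∅ := by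
    refine fun p hp => Set.eq_empty_of_forall_notMem fun Ξ ⟨hslab, hbox⟩ => hp ?_
    refine Fintype.mem_piFinset.2 fun j => ?_
    have hpj := abs_le_of_abs_sum_mul_add_le hi₀ (hslab j) (fun i => hbox i j)
    have : (p j).natAbs ≤ ⌊R⌋₊ := Nat.le_floor (by rwa [Nat.cast_natAbs, Int.cast_abs])
    exact mem_Icc.2 ⟨by omega, by omega⟩
  calc _ = ∑ p ∈ Fintype.piFinset fun _ : κ => Icc (-⌊R⌋₊ : ℤ) ⌊R⌋₊, volume {Ξ : ι → κ → ℝ |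
        (∀ j, |∑ i, (q i : ℝ) * Ξ i j + p j| ≤ δ) ∧ ∀ i j, |Ξ i j| ≤ T} :=
        tsum_eq_sum fun p hp => by rw [hP p hp, measure_empty]
    _ ≤ ((2 * ⌊R⌋₊ + 1) ^ Fintype.card κ : ℕ) *
          (ENNReal.ofReal (2 * δ / |(q i₀ : ℝ)|) ^ Fintype.card κ *
            ENNReal.ofReal (2 * T) ^ ((Fintype.card ι - 1) * Fintype.card κ)) := by
        rw [← card_piFinset_Icc, ← nsmul_eq_mul]
        exact sum_le_card_nsmul _ _ _ fun p _ =>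
          volume_slab_le (fun i => (q i : ℝ)) hq₀ (fun j => (p j : ℝ)) δ T
    _ ≤ _ := by
        rw [← mul_assoc, Nat.cast_pow, ← ENNReal.ofReal_natCast, ← mul_pow,
          ← ENNReal.ofReal_mul (by positivity)]
        gcongr (ENNReal.ofReal ?_) ^ _ * _
        have hNR : (⌊R⌋₊ : ℝ) ≤ R := Nat.floor_le (by positivity)
        rw [mul_div_assoc', div_le_iff₀ (by positivity)]
        push_cast
        nlinarith [mul_le_mul_of_nonneg_right hNR hδ,
          mul_nonneg (sub_nonneg.2 hk) (by positivity : (0 : ℝ) ≤ 4 * δ ^ 2 + 2 * δ)]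

end Slab

lemma exists_forall_le_of_summable {ψ : ℝ → ℝ} {a m : ℕ} (hm : m ≠ 0)
    (hψ : ∀ x, 0 ≤ x → 0 ≤ ψ x)
    (hsum : Summable fun k : ℕ => ((k + 1 : ℕ) : ℝ) ^ a * ψ ((k + 1 : ℕ) : ℝ) ^ m) :
    ∃ c, ∀ k : ℕ, ψ ((k + 1 : ℕ) : ℝ) ≤ c := by
  refine ⟨1 + ∑' k : ℕ, ((k + 1 : ℕ) : ℝ) ^ a * ψ ((k + 1 : ℕ) : ℝ) ^ m, fun k => ?_⟩
  have hψk := hψ ((k + 1 : ℕ) : ℝ) (Nat.cast_nonneg _)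
  have h_term : ψ ((k + 1 : ℕ) : ℝ) ^ m ≤ ((k + 1 : ℕ) : ℝ) ^ a * ψ ((k + 1 : ℕ) : ℝ) ^ m :=
    le_mul_of_one_le_left (by positivity) (one_le_pow₀ (by simp))
  have h_tsum := hsum.le_tsum k fun j _ => by
    have := hψ ((j + 1 : ℕ) : ℝ) (Nat.cast_nonneg _)
    positivity
  rcases le_total (ψ ((k + 1 : ℕ) : ℝ)) 1 with h | h
  · linarith [h_term.trans h_tsum, pow_nonneg hψk m]
  · linarith [le_self_pow₀ h hm]

lemma tsum_natCast_pow_mul_ofReal_pow_ne_top {u : ℕ → ℝ} (hu : ∀ k, 0 ≤ u k) {a m : ℕ}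
    (hsum : Summable fun k : ℕ => ((k + 1 : ℕ) : ℝ) ^ a * u k ^ m) :
    ∑' k : ℕ, ((k + 1 : ℕ) : ℝ≥0∞) ^ a * ENNReal.ofReal (u k) ^ m ≠ ∞ := by
  simp_rw [← ENNReal.ofReal_natCast, ← ENNReal.ofReal_pow (hu _),
    ← ENNReal.ofReal_pow (Nat.cast_nonneg _),
    ← ENNReal.ofReal_mul (pow_nonneg (Nat.cast_nonneg _) _)]
  rw [← ENNReal.ofReal_tsum_of_nonneg (fun k => by have := hu k; positivity) hsum]
  exact ENNReal.ofReal_ne_top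

section Approximation

variable {ι κ : Type*} [Fintype ι] [Fintype κ]

def approxPairs (ψ : ℝ → ℝ) (Ξ : ι → κ → ℝ) : Set ((κ → ℤ) × (ι → ℤ)) :=
  {e | e.2 ≠ 0 ∧ ∀ j, |∑ i, (e.2 i : ℝ) * Ξ i j + e.1 j| ≤ ψ ‖e.2‖}

lemma tsum_volume_approxPairs_le {ψ : ℝ → ℝ} (hψ : ∀ x, 0 ≤ x → 0 ≤ ψ x) {T : ℝ} (hT : 0 ≤ T) :
    ∑' e : (κ → ℤ) × (ι → ℤ), volume {Ξ | e ∈ approxPairs ψ Ξ ∧ ∀ i j, |Ξ i j| ≤ T} ≤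
      ∑' q : ι → ℤ,
        ENNReal.ofReal (2 * (2 * ψ ‖q‖ + 2 * Fintype.card ι * T + 1) * ψ ‖q‖) ^ Fintype.card κ *
          ENNReal.ofReal (2 * T) ^ ((Fintype.card ι - 1) * Fintype.card κ) := by
  rw [ENNReal.tsum_prod', ENNReal.tsum_comm]
  refine ENNReal.tsum_le_tsum fun q => ?_
  rcases eq_or_ne q 0 with rfl | hq
  · simp [approxPairs]
  refine (ENNReal.tsum_le_tsum fun p => ?_).trans
    (tsum_volume_slab_le hq (hψ _ (norm_nonneg q)) hT)
  exact measure_mono fun Ξ hΞ => ⟨hΞ.1.2, hΞ.2⟩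

lemma tsum_volume_approxPairs_ne_top {ψ : ℝ → ℝ} [Nonempty κ] (hψ : ∀ x, 0 ≤ x → 0 ≤ ψ x)
    (hsum : Summable fun k : ℕ =>
      ((k + 1 : ℕ) : ℝ) ^ (Fintype.card ι - 1) * ψ ((k + 1 : ℕ) : ℝ) ^ Fintype.card κ)
    {T : ℝ} (hT : 0 ≤ T) :
    ∑' e : (κ → ℤ) × (ι → ℤ), volume {Ξ | e ∈ approxPairs ψ Ξ ∧ ∀ i j, |Ξ i j| ≤ T} ≠ ∞ := by
  classical
  set n := Fintype.card ι
  set m := Fintype.card κ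
  set X := ENNReal.ofReal (2 * T) ^ ((n - 1) * m)
  let F (x : ℝ) : ℝ≥0∞ := ENNReal.ofReal (2 * (2 * ψ x + 2 * n * T + 1) * ψ x) ^ m * X
  obtain ⟨c, hc⟩ := exists_forall_le_of_summable Fintype.card_ne_zero hψ hsum
  have hc₀ : 0 ≤ c := (hψ _ (Nat.cast_nonneg 1)).trans (hc 0)
  have hF (k : ℕ) : F ((k + 1 : ℕ) : ℝ) ≤
      ENNReal.ofReal (2 * (2 * c + 2 * n * T + 1)) ^ m * X *
        ENNReal.ofReal (ψ ((k + 1 : ℕ) : ℝ)) ^ m := by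
    have hψk := hψ ((k + 1 : ℕ) : ℝ) (Nat.cast_nonneg _)
    rw [mul_right_comm, ← mul_pow, ← ENNReal.ofReal_mul (by positivity)]
    simp only [F]
    gcongr
    exact hc k
  refine ne_top_of_le_ne_top ?_ (calc
    _ ≤ ∑' q : ι → ℤ, F ‖q‖ := tsum_volume_approxPairs_le hψ hT
    _ ≤ F 0 + 2 * n * 3 ^ (n - 1) * ∑' k : ℕ, ((k + 1 : ℕ) : ℝ≥0∞) ^ (n - 1) *
          F ((k + 1 : ℕ) : ℝ) := tsum_comp_norm_le F
    _ ≤ F 0 + 2 * n * 3 ^ (n - 1) * ∑' k : ℕ, ((k + 1 : ℕ) : ℝ≥0∞) ^ (n - 1) *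
          (ENNReal.ofReal (2 * (2 * c + 2 * n * T + 1)) ^ m * X *
            ENNReal.ofReal (ψ ((k + 1 : ℕ) : ℝ)) ^ m) := by
        gcongr with k
        exact hF k)
  have hsum' := tsum_natCast_pow_mul_ofReal_pow_ne_top
    (fun k => hψ ((k + 1 : ℕ) : ℝ) (Nat.cast_nonneg _)) hsum
  simp_rw [mul_left_comm _ (_ * X), ENNReal.tsum_mul_left]
  finiteness

lemma ae_finite_approxPairs {ψ : ℝ → ℝ} [Nonempty κ] (hψ : ∀ x, 0 ≤ x → 0 ≤ ψ x)
    (hsum : Summable fun k : ℕ =>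
      ((k + 1 : ℕ) : ℝ) ^ (Fintype.card ι - 1) * ψ ((k + 1 : ℕ) : ℝ) ^ Fintype.card κ) :
    ∀ᵐ Ξ : ι → κ → ℝ, (approxPairs ψ Ξ).Finite := by
  have h : ∀ᵐ Ξ : ι → κ → ℝ, ∀ T : ℕ,
      {e | Ξ ∈ {Ξ | e ∈ approxPairs ψ Ξ ∧ ∀ i j, |Ξ i j| ≤ T}}.Finite :=
    ae_all_iff.2 fun T =>
      ae_finite_setOfPred_mem (tsum_volume_approxPairs_ne_top hψ hsum (Nat.cast_nonneg T))
  filter_upwards [h] with Ξ hΞ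
  refine (hΞ ⌈‖Ξ‖⌉₊).subset fun e he => ⟨he, fun i j => ?_⟩
  exact ((norm_le_pi_norm (Ξ i) j).trans (norm_le_pi_norm Ξ i)).trans (Nat.le_ceil _)

lemma exists_ne_zero_of_mem_approxPairs {ψ : ℝ → ℝ} (hψ : ∀ x, 0 ≤ x → 0 ≤ ψ x)
    {Ξ : ι → κ → ℝ} (hfin : (approxPairs ψ Ξ).Finite) {e : (κ → ℤ) × (ι → ℤ)}
    (he : e ∈ approxPairs ψ Ξ) : ∃ j, ∑ i, (e.2 i : ℝ) * Ξ i j + e.1 j ≠ 0 := by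
  by_contra! hzero
  refine hfin.not_infinite (Set.infinite_of_injective_forall_mem
    (f := fun k : ℕ => ((k : ℤ) + 1) • e) (fun k l hkl => ?_) fun k => ⟨?_, fun j => ?_⟩)
  · simpa using smul_left_injective ℤ (fun h => he.1 (congrArg Prod.snd h)) hkl
  · exact smul_ne_zero (by positivity : (k : ℤ) + 1 ≠ 0) he.1
  · have h : ∑ i, ((((k : ℤ) + 1) • e).2 i : ℝ) * Ξ i j + (((k : ℤ) + 1) • e).1 j =
        (k + 1) * (∑ i, (e.2 i : ℝ) * Ξ i j + e.1 j) := by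
      simp only [Prod.smul_fst, Prod.smul_snd, Pi.smul_apply, smul_eq_mul]
      push_cast
      rw [mul_add, mul_sum]
      simp only [mul_assoc]
    rw [h, hzero j, mul_zero, abs_zero]
    exact hψ _ (norm_nonneg _)

lemma exists_pos_forall_lt_of_finite {ψ : ℝ → ℝ} (hψ : ∀ x, 0 ≤ x → 0 ≤ ψ x)
    {Ξ : ι → κ → ℝ} (hfin : (approxPairs ψ Ξ).Finite) :
    ∃ c : ℝ, 0 < c ∧ ∀ (p : κ → ℤ) (q : ι → ℤ), q ≠ 0 →
      ∃ j, c * ψ ‖q‖ < |∑ i, (q i : ℝ) * Ξ i j + p j| := by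
  have hsmall : ∀ e ∈ approxPairs ψ Ξ, ∀ᶠ c in 𝓝 (0 : ℝ),
      ∃ j, c * ψ ‖e.2‖ < |∑ i, (e.2 i : ℝ) * Ξ i j + e.1 j| := fun e he => by
    obtain ⟨j, hj⟩ := exists_ne_zero_of_mem_approxPairs hψ hfin he
    have hlim : Tendsto (fun c : ℝ => c * ψ ‖e.2‖) (𝓝 0) (𝓝 0) := by
      simpa using (tendsto_id (x := 𝓝 (0 : ℝ))).mul_const (ψ ‖e.2‖)
    exact (hlim.eventually_lt_const (abs_pos.2 hj)).mono fun c hc => ⟨j, hc⟩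
  have hc : ∀ᶠ c in 𝓝[>] (0 : ℝ), ((∀ e ∈ approxPairs ψ Ξ,
      ∃ j, c * ψ ‖e.2‖ < |∑ i, (e.2 i : ℝ) * Ξ i j + e.1 j|) ∧ c ≤ 1) ∧ 0 < c :=
    (((hfin.eventually_all.2 hsmall).and (eventually_le_nhds zero_lt_one)).filter_mono
      nhdsWithin_le_nhds).and self_mem_nhdsWithin
  obtain ⟨c, ⟨hc_small, hc_le⟩, hc_pos⟩ := hc.exists
  refine ⟨c, hc_pos, fun p q hq => ?_⟩
  by_cases he : (p, q) ∈ approxPairs ψ Ξ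
  · exact hc_small (p, q) he
  · obtain ⟨j, hj⟩ : ∃ j, ψ ‖q‖ < |∑ i, (q i : ℝ) * Ξ i j + p j| := by
      simpa [approxPairs, hq] using he
    exact ⟨j, (mul_le_of_le_one_left (hψ _ (norm_nonneg q)) hc_le).trans_lt hj⟩

end Approximation

theorem stmt4_general (n m : ℕ) (hm : 1 ≤ m) (ψ : ℝ → ℝ)
    (hψ : ∀ x : ℝ, 0 ≤ x → 0 ≤ ψ x)
    (hsum : Summable fun q : ℕ => ((q + 1 : ℕ) : ℝ) ^ (n - 1) * ψ ((q + 1 : ℕ) : ℝ) ^ m) :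
    ∀ᵐ Ξ : Fin n → Fin m → ℝ ∂volume,
      ∃ κ : ℝ, 0 < κ ∧
        ∀ (p : Fin m → ℤ) (q : Fin n → ℤ), q ≠ 0 →
          ∃ j : Fin m, κ * ψ ‖q‖ < |∑ i, (q i : ℝ) * Ξ i j + (p j : ℝ)| := by
  have : Nonempty (Fin m) := ⟨⟨0, hm⟩⟩
  filter_upwards [ae_finite_approxPairs hψ (by simpa only [Fintype.card_fin] using hsum)]
    with Ξ hΞ using exists_pos_forall_lt_of_finite hψ hΞ

/-- If `∑_{q≥1} q^(n-1) ψ(q)^m < ∞` then for Lebesgue-almost every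
`n × m` real matrix `Ξ` there exists `κ(Ξ) > 0` such that
`max_{1≤j≤m} |q₁Ξ_{1j} + ⋯ + qₙΞ_{nj} + p_j| > κ(Ξ) ψ(|q|_∞)` for all
`(p, q) ∈ ℤ^m × (ℤⁿ \ {0})`. -/
theorem stmt4 (n m : ℕ) (hn : 1 ≤ n) (hm : 1 ≤ m) (ψ : ℝ → ℝ)
    (hψ : ∀ x : ℝ, 0 ≤ x → 0 ≤ ψ x)
    (hsum : Summable fun q : ℕ => ((q + 1 : ℕ) : ℝ) ^ (n - 1) * ψ ((q + 1 : ℕ) : ℝ) ^ m) :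
    ∀ᵐ Ξ : Fin n → Fin m → ℝ ∂volume,
      ∃ κ : ℝ, 0 < κ ∧
        ∀ (p : Fin m → ℤ) (q : Fin n → ℤ), q ≠ 0 →
          ∃ j : Fin m, κ * ψ ‖q‖ < |∑ i, (q i : ℝ) * Ξ i j + (p j : ℝ)| :=
  stmt4_general n m hm ψ hψ hsum
end

section
/- Let n, m ≥ 1 be integers, let ε > 0 and let s ≥ 1 be a real number. For ξ ∈ ℝ^n and N ∈ ℕ set S_ξ(N,s,ε) := {ℓ ∈ {1,…,N} : there exists v ∈ ℤ^{n+1} \ {0} with ‖g_{sℓ} u_ξ v‖ < ε}; for δ ∈ [0,1) set Z(ε,N,s,δ) := {ξ ∈ B_1^n : #S_ξ(N,s,ε) ≥ δN}, where B_1^n is the closed unit ball in ℝ^n centred at the origin; for δ = (δ_1,…,δ_m) set Z_m(ε,N,s,δ) := Z(ε,N,s,δ_1) × … × Z(ε,N,s,δ_m); and set Δ_s := {δ = (δ_1,…,δ_m) ∈ (1/s)ℤ^m ∩ [0,1)^m : δ_1 + … + δ_m ≥ 1 − (m+1)/s}. Then for every Ξ ∈ Sing^m(n) all of whose columns ξ_1,…,ξ_m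 lie in B_1^n, there exists N_0 ∈ ℕ such that for every integer N ≥ N_0 there exists δ ∈ Δ_s with (ξ_1,…,ξ_m) ∈ Z_m(ε,N,s,δ). -/
/-- The set `Sing^m(n)` of jointly singular `n × m` real matrices. -/
def jointlySing (n m : ℕ) : Set (Fin n → Fin m → ℝ) :=
  {Ξ | ∀ ε : ℝ, 0 < ε → ∃ Q₀ : ℕ, ∀ Q : ℕ, Q₀ ≤ Q →
    ∃ (p : Fin m → ℤ) (q : Fin n → ℤ), 1 ≤ ‖q‖ ∧ ‖q‖ ≤ (Q : ℝ) ∧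
      ∃ j : Fin m, |∑ i, (q i : ℝ) * Ξ i j + (p j : ℝ)| < ε / (Q : ℝ) ^ n}

/-- The diagonal matrix `g_t = diag(e^{nt}, e^{-t}, …, e^{-t})`. -/
noncomputable def gMat (n : ℕ) (t : ℝ) : Matrix (Fin (n + 1)) (Fin (n + 1)) ℝ :=
  Matrix.diagonal fun i => if i = 0 then Real.exp (n * t) else Real.exp (-t)

/-- The unipotent matrix `u_ξ`: the identity except that its first row is `(1, ξ₁, …, ξₙ)`. -/
def uMat (n : ℕ) (ξ : Fin n → ℝ) : Matrix (Fin (n + 1)) (Fin (n + 1)) ℝ :=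
  Matrix.of fun i j => if i = 0 then (Fin.cons 1 ξ : Fin (n + 1) → ℝ) j
    else if j = i then 1 else 0

/-- `S_ξ(N, s, ε)`: the set of `ℓ ∈ {1, …, N}` such that the lattice `g_{sℓ} u_ξ ℤ^{n+1}`
contains a non-zero vector of sup-norm less than `ε`. -/
noncomputable def Sxi (n : ℕ) (ξ : Fin n → ℝ) (N : ℕ) (s ε : ℝ) : Set ℕ :=
  {ℓ : ℕ | 1 ≤ ℓ ∧ ℓ ≤ N ∧ ∃ v : Fin (n + 1) → ℤ, v ≠ 0 ∧
    ‖(gMat n (s * ℓ) * uMat n ξ).mulVec fun i => (v i : ℝ)‖ < ε}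

/-- `Z(ε, N, s, δ)`: the set of `ξ` in the closed unit ball `B_1^n` with
`#S_ξ(N, s, ε) ≥ δ N`. -/
noncomputable def Zset (n : ℕ) (ε : ℝ) (N : ℕ) (s δ : ℝ) : Set (Fin n → ℝ) :=
  {ξ ∈ Metric.closedBall (0 : Fin n → ℝ) 1 | δ * N ≤ ((Sxi n ξ N s ε).ncard : ℝ)}

/-!
By Dani's correspondence, an approximation `|q · ξ_j + p_j| < ε (ε/4)^n Q^{-n}` with
`1 ≤ |q|_∞ ≤ Q = ⌊ε e^t / 2⌋` makes `(p_j, q)` a non-zero vector of sup-norm `< ε` in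
`g_t u_{ξ_j} ℤ^{n+1}`. Joint singularity therefore puts every `ℓ ≥ L₀` into some `S_{ξ_j}(N, s, ε)`,
so `∑_j #S_{ξ_j} ≥ N + 1 - L₀`. Rounding each `#S_{ξ_j} / N` down into `(1/s)ℤ ∩ [0, 1)` loses at
most `1/s` per coordinate, and `L₀ / N ≤ 1/s` once `N ≥ s L₀`.
-/

open Filter Matrix

lemma gMat_mul_uMat_mulVec_cons (n : ℕ) (t : ℝ) (ξ : Fin n → ℝ) (x : ℝ) (y : Fin n → ℝ) :
    (gMat n t * uMat n ξ) *ᵥ Fin.cons x y =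
      Fin.cons (Real.exp (n * t) * (x + ∑ i, ξ i * y i)) fun i => Real.exp (-t) * y i := by
  rw [← Matrix.mulVec_mulVec, gMat]
  funext i
  rw [Matrix.mulVec_diagonal]
  refine Fin.cases ?_ (fun i => ?_) i
  · simp [Matrix.mulVec, dotProduct, uMat, Fin.sum_univ_succ, mul_comm]
  · simp [Matrix.mulVec, dotProduct, uMat, Fin.succ_ne_zero]

lemma norm_gMat_mul_uMat_mulVec_cons_lt {n : ℕ} {t ε Q : ℝ} (ξ : Fin n → ℝ) (p : ℤ)
    (q : Fin n → ℤ) (hqQ : ‖q‖ ≤ Q) (hQ : Q < ε * Real.exp t)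
    (happrox : Real.exp (n * t) * |p + ∑ i, ξ i * q i| < ε) :
    ‖(gMat n t * uMat n ξ) *ᵥ fun i => ((Fin.cons p q : Fin (n + 1) → ℤ) i : ℝ)‖ < ε := by
  have hε : 0 < ε := (by positivity : (0 : ℝ) ≤ _).trans_lt happrox
  have hcast : (fun i => ((Fin.cons p q : Fin (n + 1) → ℤ) i : ℝ)) =
      Fin.cons (p : ℝ) fun i => (q i : ℝ) :=
    Fin.comp_cons Int.cast p q
  rw [hcast, gMat_mul_uMat_mulVec_cons, pi_norm_lt_iff hε, Fin.forall_fin_succ]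
  refine ⟨by simpa [abs_mul] using happrox, fun i => ?_⟩
  have hqi : |(q i : ℝ)| ≤ Q := by
    rw [← Int.norm_eq_abs]; exact (norm_le_pi_norm q i).trans hqQ
  calc ‖Real.exp (-t) * (q i : ℝ)‖ = Real.exp (-t) * |(q i : ℝ)| := by simp
    _ ≤ Real.exp (-t) * Q := by gcongr
    _ < Real.exp (-t) * (ε * Real.exp t) := by gcongr
    _ = ε := by rw [mul_left_comm, ← Real.exp_add, neg_add_cancel, Real.exp_zero, mul_one]

theorem eventually_exists_short_vector_of_mem_jointlySing {n m : ℕ} {Ξ : Fin n → Fin m → ℝ}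
    (hΞ : Ξ ∈ jointlySing n m) {ε : ℝ} (hε : 0 < ε) :
    ∀ᶠ t in atTop, ∃ j, ∃ v : Fin (n + 1) → ℤ, v ≠ 0 ∧
      ‖(gMat n t * uMat n fun i => Ξ i j) *ᵥ fun i => (v i : ℝ)‖ < ε := by
  obtain ⟨Q₀, hQ₀⟩ := hΞ (ε * (ε / 4) ^ n) (by positivity)
  have hx : Tendsto (fun t => ε * Real.exp t / 2) atTop atTop :=
    (Real.tendsto_exp_atTop.const_mul_atTop hε).atTop_div_const two_pos
  filter_upwards [hx.eventually_ge_atTop (max 2 Q₀)] with t ht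
  set Q := ⌊ε * Real.exp t / 2⌋₊
  have hQ_le : (Q : ℝ) ≤ ε * Real.exp t / 2 := Nat.floor_le (by positivity)
  have hQ_ge : ε * Real.exp t / 4 ≤ Q := by
    have := Nat.sub_one_lt_floor (ε * Real.exp t / 2)
    linarith [le_max_left 2 (Q₀ : ℝ)]
  obtain ⟨p, q, hq1, hqQ, j, hj⟩ := hQ₀ Q (Nat.le_floor ((le_max_right _ _).trans ht))
  have hq : q ≠ 0 := by rintro rfl; norm_num at hq1
  refine ⟨j, Fin.cons (p j) q, fun h => hq (congrArg Fin.tail h),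
    norm_gMat_mul_uMat_mulVec_cons_lt _ (p j) q hqQ (by linarith [mul_pos hε (Real.exp_pos t)]) ?_⟩
  calc Real.exp (n * t) * |(p j : ℝ) + ∑ i, Ξ i j * q i|
      = Real.exp (n * t) * |∑ i, (q i : ℝ) * Ξ i j + p j| := by
        simp only [mul_comm (Ξ _ j), add_comm]
    _ < Real.exp (n * t) * (ε * (ε / 4) ^ n / Q ^ n) := by gcongr
    _ ≤ Real.exp (n * t) * (ε * (ε / 4) ^ n / (ε * Real.exp t / 4) ^ n) := by gcongr
    _ = ε := by
        rw [Real.exp_nat_mul, div_pow, div_pow, mul_pow]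
        field_simp

lemma Set.ncard_le_sum_ncard_of_subset_iUnion {α ι : Type*} [Fintype ι] {T : Set α}
    {S : ι → Set α} (hS : ∀ i, (S i).Finite) (hT : T ⊆ ⋃ i, S i) :
    T.ncard ≤ ∑ i, (S i).ncard := by
  calc T.ncard ≤ (⋃ i, S i).ncard := Set.ncard_le_ncard hT (Set.finite_iUnion hS)
    _ = (⋃ i ∈ Finset.univ, S i).ncard := by simp
    _ ≤ ∑ i, (S i).ncard := Finset.univ.set_ncard_biUnion_le S

lemma exists_int_div_mem_Ico_of_mem_Icc {s a : ℝ} (hs : 0 < s) (ha : a ∈ Set.Icc (0 : ℝ) 1) :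
    ∃ k : ℤ, (k / s ∈ Set.Ico (0 : ℝ) 1) ∧ k / s ≤ a ∧ a - 1 / s ≤ k / s := by
  have hsa : 0 ≤ s * a := mul_nonneg hs.le ha.1
  have hsa_le : s * a ≤ s := mul_le_of_le_one_right hs.le ha.2
  have hceil_lt := Int.ceil_lt_add_one (s * a)
  have hceil_ge := Int.le_ceil (s * a)
  set k : ℤ := max (⌈s * a⌉ - 1) 0
  have hk : (k : ℝ) = max ((⌈s * a⌉ : ℝ) - 1) 0 := by push_cast [k]; rfl
  have hk0 : (0 : ℝ) ≤ k := hk ▸ le_max_right _ _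
  have hk_le : (k : ℝ) ≤ s * a := hk ▸ max_le (by linarith) hsa
  have hk_lt : (k : ℝ) < s := hk ▸ max_lt (by linarith) hs
  have hk_ge : s * a - 1 ≤ k := hk ▸ le_max_of_le_left (by linarith)
  refine ⟨k, ⟨div_nonneg hk0 hs.le, (div_lt_one hs).2 hk_lt⟩, (div_le_iff₀' hs).2 hk_le, ?_⟩
  rw [le_div_iff₀ hs, sub_mul, one_div_mul_cancel hs.ne']
  linarith

lemma Sxi_subset_Icc (n : ℕ) (ξ : Fin n → ℝ) (N : ℕ) (s ε : ℝ) :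
    Sxi n ξ N s ε ⊆ Set.Icc 1 N :=
  fun _ hℓ => ⟨hℓ.1, hℓ.2.1⟩

lemma finite_Sxi (n : ℕ) (ξ : Fin n → ℝ) (N : ℕ) (s ε : ℝ) : (Sxi n ξ N s ε).Finite :=
  (Set.finite_Icc 1 N).subset (Sxi_subset_Icc n ξ N s ε)

lemma ncard_Sxi_le (n : ℕ) (ξ : Fin n → ℝ) (N : ℕ) (s ε : ℝ) : (Sxi n ξ N s ε).ncard ≤ N :=
  (Set.ncard_le_ncard (Sxi_subset_Icc n ξ N s ε)).trans (by simp)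

-- The set `Δ_s` of the paper.
def deltaSet (m : ℕ) (s : ℝ) : Set (Fin m → ℝ) :=
  {δ | (∀ j, ∃ k : ℤ, δ j = (k : ℝ) / s) ∧ (∀ j, δ j ∈ Set.Ico (0 : ℝ) 1) ∧
    1 - ((m : ℝ) + 1) / s ≤ ∑ j, δ j}

lemma exists_mem_deltaSet_le {m : ℕ} {s : ℝ} (hs : 0 < s) (a : Fin m → ℝ)
    (ha : ∀ j, a j ∈ Set.Icc (0 : ℝ) 1) (hsum : 1 - 1 / s ≤ ∑ j, a j) :
    ∃ δ ∈ deltaSet m s, ∀ j, δ j ≤ a j := by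
  choose k hk_mem hk_le hk_ge using fun j => exists_int_div_mem_Ico_of_mem_Icc hs (ha j)
  refine ⟨fun j => k j / s, ⟨fun j => ⟨k j, rfl⟩, hk_mem, ?_⟩, hk_le⟩
  calc 1 - ((m : ℝ) + 1) / s = (1 - 1 / s) - ∑ _j : Fin m, 1 / s := by simp; ring
    _ ≤ ∑ j, a j - ∑ _j : Fin m, 1 / s := by linarith
    _ = ∑ j, (a j - 1 / s) := by rw [Finset.sum_sub_distrib]
    _ ≤ ∑ j, (k j : ℝ) / s := Finset.sum_le_sum fun j _ => hk_ge j

theorem stmt13_general (n m : ℕ) (ε s : ℝ) (hε : 0 < ε) (hs : 1 ≤ s)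
    (Ξ : Fin n → Fin m → ℝ) (hΞ : Ξ ∈ jointlySing n m)
    (hball : ∀ j, (fun i => Ξ i j) ∈ Metric.closedBall (0 : Fin n → ℝ) 1) :
    ∃ N₀ : ℕ, ∀ N : ℕ, N₀ ≤ N →
      ∃ δ : Fin m → ℝ,
        ((∀ j, ∃ k : ℤ, δ j = (k : ℝ) / s) ∧ (∀ j, δ j ∈ Set.Ico (0 : ℝ) 1) ∧
          1 - ((m : ℝ) + 1) / s ≤ ∑ j, δ j) ∧
        ∀ j, (fun i => Ξ i j) ∈ Zset n ε N s (δ j) := by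
  have hs₀ : 0 < s := one_pos.trans_le hs
  obtain ⟨L₀, hL₀⟩ := eventually_atTop.1
    (((tendsto_natCast_atTop_atTop.const_mul_atTop hs₀).eventually
      (eventually_exists_short_vector_of_mem_jointlySing hΞ hε)).and (eventually_ge_atTop 1))
  refine ⟨⌈s * L₀⌉₊, fun N hN => ?_⟩
  set S := fun j => Sxi n (fun i => Ξ i j) N s ε
  have hsL₀ : s * L₀ ≤ N := Nat.ceil_le.1 hN
  have hN₀ : (0 : ℝ) < N :=
    (mul_pos hs₀ (Nat.cast_pos.2 (hL₀ L₀ le_rfl).2)).trans_le hsL₀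
  have hcover : Set.Icc L₀ N ⊆ ⋃ j, S j := fun ℓ hℓ =>
    have ⟨⟨j, v, hv, hshort⟩, hℓ₁⟩ := hL₀ ℓ hℓ.1
    Set.mem_iUnion.2 ⟨j, hℓ₁, hℓ.2, v, hv, hshort⟩
  have hcount : (N : ℝ) + 1 ≤ ∑ j, ((S j).ncard : ℝ) + L₀ := by
    have := Set.ncard_le_sum_ncard_of_subset_iUnion (S := S) (fun j => finite_Sxi ..) hcover
    rw [Set.ncard_Icc_nat] at this
    exact_mod_cast (by omega : N + 1 ≤ ∑ j, (S j).ncard + L₀)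
  obtain ⟨δ, hδ, hδS⟩ := exists_mem_deltaSet_le hs₀ (fun j => (S j).ncard / N)
    (fun j => ⟨by positivity, div_le_one_of_le₀ (by exact_mod_cast ncard_Sxi_le ..) hN₀.le⟩) (by
      rw [← Finset.sum_div, le_div_iff₀ hN₀, sub_mul, one_div_mul_eq_div, one_mul]
      linarith [(le_div_iff₀' hs₀).2 hsL₀])
  exact ⟨δ, hδ, fun j => ⟨hball j, (le_div_iff₀ hN₀).1 (hδS j)⟩⟩

/-- Let `ε > 0` and `s ≥ 1`.  For every `Ξ ∈ Sing^m(n)` all of whose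
columns lie in the closed unit ball `B_1^n`, there exists `N₀ ∈ ℕ` such that for every
`N ≥ N₀` there exists `δ = (δ₁, …, δ_m) ∈ Δ_s` (i.e. each `δ_j ∈ (1/s)ℤ ∩ [0,1)` and
`δ₁ + ⋯ + δ_m ≥ 1 − (m+1)/s`) with `(ξ₁, …, ξ_m) ∈ Z(ε,N,s,δ₁) × ⋯ × Z(ε,N,s,δ_m)`. -/
theorem stmt13 (n m : ℕ) (hn : 1 ≤ n) (hm : 1 ≤ m) (ε s : ℝ) (hε : 0 < ε) (hs : 1 ≤ s)
    (Ξ : Fin n → Fin m → ℝ) (hΞ : Ξ ∈ jointlySing n m)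
    (hball : ∀ j, (fun i => Ξ i j) ∈ Metric.closedBall (0 : Fin n → ℝ) 1) :
    ∃ N₀ : ℕ, ∀ N : ℕ, N₀ ≤ N →
      ∃ δ : Fin m → ℝ,
        ((∀ j, ∃ k : ℤ, δ j = (k : ℝ) / s) ∧ (∀ j, δ j ∈ Set.Ico (0 : ℝ) 1) ∧
          1 - ((m : ℝ) + 1) / s ≤ ∑ j, δ j) ∧
        ∀ j, (fun i => Ξ i j) ∈ Zset n ε N s (δ j) :=
  stmt13_general n m ε s hε hs Ξ hΞ hball
end

section
/- Let n ≥ 1 be an integer and let ξ be a real algebraic number of degree n+1 over ℚ. Then the point (ξ, ξ², …, ξ^n) ∈ ℝ^n is badly approximable: there exists a constant κ > 0 such that |q_1ξ + q_2ξ² + … + q_nξ^n + p| ≥ κ/|q|_∞^n for all p ∈ ℤ and all q = (q_1,…,q_n) ∈ ℤ^n \ {0}. -/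
/-!
Put `y = p + q₁ξ + ⋯ + qₙξⁿ ∈ ℚ(ξ)`; it is nonzero because `ξ` has degree `n + 1`. If `a ξ` is
an algebraic integer for some integer `a ≠ 0`, so is `aⁿ y`, hence its norm, the product of its
`n + 1` conjugates, is a nonzero integer. The conjugate under the real embedding is `aⁿ y`, and
each of the other `n` conjugates is `O(max(|p|, ‖q‖))`, so `|y| ≫ max(|p|, ‖q‖)⁻ⁿ`. When
`|y| < 1` we have `|p| ≪ ‖q‖`, which gives the bound in terms of `‖q‖` alone.
-/

open IntermediateField Module

theorem Finset.prod_le_mul_pow_card_sub_one {ι R : Type*} [Fintype ι] [DecidableEq ι]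
    [CommSemiring R] [PartialOrder R] [IsOrderedRing R]
    {f : ι → R} (hf : ∀ i, 0 ≤ f i) (i₀ : ι) {B : R} (hB : ∀ i ≠ i₀, f i ≤ B) :
    ∏ i, f i ≤ f i₀ * B ^ (Fintype.card ι - 1) := by
  rw [← Finset.mul_prod_erase _ _ (Finset.mem_univ i₀)]
  refine mul_le_mul_of_nonneg_left ?_ (hf i₀)
  calc ∏ i ∈ Finset.univ.erase i₀, f i ≤ ∏ _i ∈ Finset.univ.erase i₀, B :=
        Finset.prod_le_prod (fun i _ => hf i) fun i hi => hB i (Finset.ne_of_mem_erase hi)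
    _ = B ^ (Fintype.card ι - 1) := by
        rw [Finset.prod_const, Finset.card_erase_of_mem (Finset.mem_univ _), Finset.card_univ]

theorem RCLike.norm_sum_intCast_mul_pow_le {𝕜 ι : Type*} [RCLike 𝕜] [Fintype ι]
    (v : ι → ℤ) (e : ι → ℕ) (w : 𝕜) :
    ‖∑ i, (v i : 𝕜) * w ^ e i‖ ≤ ‖v‖ * ∑ i, ‖w‖ ^ e i := by
  rw [Finset.mul_sum]
  refine (norm_sum_le _ _).trans (Finset.sum_le_sum fun i _ => ?_)
  rw [norm_mul, norm_pow, ← RCLike.ofReal_intCast, RCLike.norm_ofReal, ← Int.norm_eq_abs]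
  exact mul_le_mul_of_nonneg_right (norm_le_pi_norm v i) (by positivity)

theorem isIntegral_pow_mul_sum_intCast_mul_pow {L : Type*} [CommRing L] {a : ℤ} {x : L}
    (hax : IsIntegral ℤ ((a : L) * x)) {m : ℕ} (v : Fin (m + 1) → ℤ) :
    IsIntegral ℤ ((a : L) ^ m * ∑ j, (v j : L) * x ^ (j : ℕ)) := by
  have hsum : (a : L) ^ m * ∑ j, (v j : L) * x ^ (j : ℕ) =
      ∑ j : Fin (m + 1), ((v j * a ^ (m - j) : ℤ) : L) * ((a : L) * x) ^ (j : ℕ) := by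
    rw [Finset.mul_sum]
    refine Finset.sum_congr rfl fun j _ => ?_
    rw [← pow_sub_mul_pow (a : L) (Nat.lt_succ_iff.mp j.isLt)]
    push_cast
    ring
  rw [hsum]
  exact IsIntegral.sum _ fun j _ => isIntegral_algebraMap.mul (hax.pow _)

namespace NumberField

variable {L : Type*} [Field L] [NumberField L]

theorem one_le_prod_norm_embeddings_of_isIntegral {z : L} (hz : IsIntegral ℤ z) (hz0 : z ≠ 0) :
    1 ≤ ∏ σ : L →ₐ[ℚ] ℂ, ‖σ z‖ := by
  have hnorm : (1 : ℝ) ≤ |(Algebra.norm ℚ z : ℝ)| := by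
    let w : 𝓞 L := ⟨z, hz⟩
    have hw0 : w ≠ 0 := fun h => hz0 (congrArg Subtype.val h)
    rw [show Algebra.norm ℚ z = Algebra.norm ℚ (w : L) from rfl, ← Algebra.coe_norm_int]
    push_cast
    exact_mod_cast Int.one_le_abs (Algebra.norm_ne_zero_iff.mpr hw0)
  rw [← norm_prod, ← Algebra.norm_eq_prod_embeddings, eq_ratCast, ← Complex.ofReal_ratCast,
    Complex.norm_real, Real.norm_eq_abs]
  exact hnorm

theorem exists_pos_div_le_norm_embedding_sum (x : L) (σ₀ : L →ₐ[ℚ] ℂ) (m : ℕ) :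
    ∃ c > 0, ∀ v : Fin (m + 1) → ℤ, ∑ j, (v j : L) * x ^ (j : ℕ) ≠ 0 →
      c / ‖v‖ ^ (finrank ℚ L - 1) ≤ ‖σ₀ (∑ j, (v j : L) * x ^ (j : ℕ))‖ := by
  classical
  obtain ⟨a, ha0, hax⟩ : ∃ a : ℤ, a ≠ 0 ∧ IsIntegral ℤ ((a : L) * x) := by
    obtain ⟨a, ha0, hax⟩ := ((IsFractionRing.isAlgebraic_iff ℤ ℚ L).mpr
      (Algebra.IsAlgebraic.isAlgebraic x)).exists_integral_multiple
    exact ⟨a, ha0, by rwa [zsmul_eq_mul] at hax⟩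
  set R : ℝ := ∑ σ : L →ₐ[ℚ] ℂ, ∑ j : Fin (m + 1), ‖σ x‖ ^ (j : ℕ)
  have hR : 1 ≤ R :=
    calc (1 : ℝ) = ‖σ₀ x‖ ^ ((0 : Fin (m + 1)) : ℕ) := by simp
      _ ≤ ∑ j : Fin (m + 1), ‖σ₀ x‖ ^ (j : ℕ) :=
        Finset.single_le_sum (f := fun j : Fin (m + 1) => ‖σ₀ x‖ ^ (j : ℕ))
          (fun j _ => by positivity) (Finset.mem_univ 0)
      _ ≤ R := Finset.single_le_sum (f := fun σ : L →ₐ[ℚ] ℂ => ∑ j : Fin (m + 1), ‖σ x‖ ^ (j : ℕ))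
        (fun σ _ => by positivity) (Finset.mem_univ σ₀)
  set C : ℝ := |(a : ℝ)| ^ m * R
  refine ⟨1 / (|(a : ℝ)| ^ m * C ^ (finrank ℚ L - 1)), by positivity, fun v hy => ?_⟩
  set y := ∑ j, (v j : L) * x ^ (j : ℕ)
  have hv : 0 < ‖v‖ := norm_pos_iff.mpr fun h => hy (by simp [y, h])
  have hσ : ∀ σ : L →ₐ[ℚ] ℂ, ‖σ ((a : L) ^ m * y)‖ = |(a : ℝ)| ^ m * ‖σ y‖ := fun σ => by
    simp
  have hbound : ∀ σ : L →ₐ[ℚ] ℂ, ‖σ ((a : L) ^ m * y)‖ ≤ ‖v‖ * C := fun σ => by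
    have hσy : σ y = ∑ j, (v j : ℂ) * σ x ^ (j : ℕ) := by simp [y]
    have hsum : ∑ j : Fin (m + 1), ‖σ x‖ ^ (j : ℕ) ≤ R :=
      Finset.single_le_sum (f := fun σ : L →ₐ[ℚ] ℂ => ∑ j : Fin (m + 1), ‖σ x‖ ^ (j : ℕ))
        (fun σ _ => by positivity) (Finset.mem_univ σ)
    calc ‖σ ((a : L) ^ m * y)‖ = |(a : ℝ)| ^ m * ‖σ y‖ := hσ σ
      _ ≤ |(a : ℝ)| ^ m * (‖v‖ * R) := by
        rw [hσy]
        gcongr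
        exact (RCLike.norm_sum_intCast_mul_pow_le v _ _).trans (by gcongr)
      _ = ‖v‖ * C := by ring
  have key : 1 ≤ |(a : ℝ)| ^ m * ‖σ₀ y‖ * (‖v‖ * C) ^ (finrank ℚ L - 1) := by
    calc (1 : ℝ) ≤ ∏ σ : L →ₐ[ℚ] ℂ, ‖σ ((a : L) ^ m * y)‖ :=
          one_le_prod_norm_embeddings_of_isIntegral (isIntegral_pow_mul_sum_intCast_mul_pow hax v)
            (mul_ne_zero (pow_ne_zero _ (by exact_mod_cast ha0)) hy)
      _ ≤ _ := by
        rw [← hσ σ₀, ← AlgHom.card ℚ L ℂ]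
        exact Finset.prod_le_mul_pow_card_sub_one (fun _ => norm_nonneg _) σ₀
          fun σ _ => hbound σ
  rw [div_le_iff₀ (by positivity), div_le_iff₀ (by positivity)]
  calc (1 : ℝ) ≤ _ := key
    _ = _ := by ring

end NumberField

theorem sum_intCast_mul_pow_ne_zero_of_lt_natDegree_minpoly {S : Type*} [CommRing S]
    [Algebra ℚ S] {x : S} {m : ℕ} (hm : m < (minpoly ℚ x).natDegree) {v : Fin (m + 1) → ℤ}
    (hv : v ≠ 0) :
    ∑ j, (v j : S) * x ^ (j : ℕ) ≠ 0 := by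
  have hli := (linearIndependent_pow (K := ℚ) x).comp (Fin.castLE hm) (Fin.castLE_injective hm)
  intro h
  refine hv (funext fun j => ?_)
  exact_mod_cast Fintype.linearIndependent_iff.mp hli (fun j => (v j : ℚ))
    (by simpa [Algebra.smul_def] using h) j

theorem one_le_pi_norm_of_ne_zero {ι : Type*} [Fintype ι] {q : ι → ℤ} (hq : q ≠ 0) :
    1 ≤ ‖q‖ := by
  obtain ⟨i, hi⟩ := Function.ne_iff.mp hq
  calc (1 : ℝ) ≤ |(q i : ℝ)| := by exact_mod_cast Int.one_le_abs hi
    _ = ‖q i‖ := (Int.norm_eq_abs _).symm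
    _ ≤ ‖q‖ := norm_le_pi_norm q i

theorem norm_cons_le_mul_norm_of_abs_lt_one (ξ : ℝ) {n : ℕ} (p : ℤ) {q : Fin n → ℤ}
    (hq : q ≠ 0) (h : |∑ i, (q i : ℝ) * ξ ^ ((i : ℕ) + 1) + (p : ℝ)| < 1) :
    ‖(Fin.cons p q : Fin (n + 1) → ℤ)‖ ≤ (1 + ∑ i : Fin n, |ξ| ^ ((i : ℕ) + 1)) * ‖q‖ := by
  set S := ∑ i, (q i : ℝ) * ξ ^ ((i : ℕ) + 1)
  have hS : |S| ≤ ‖q‖ * ∑ i : Fin n, |ξ| ^ ((i : ℕ) + 1) := by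
    simpa only [Real.norm_eq_abs] using RCLike.norm_sum_intCast_mul_pow_le q (fun i => i + 1) ξ
  have hq1 := one_le_pi_norm_of_ne_zero hq
  have hE : 0 ≤ ∑ i : Fin n, |ξ| ^ ((i : ℕ) + 1) := by positivity
  refine (pi_norm_le_iff_of_nonneg (by positivity)).mpr (Fin.cases ?_ fun i => ?_)
  · have := abs_sub (S + p) S
    simp only [Fin.cons_zero, Int.norm_eq_abs, add_sub_cancel_left] at this ⊢
    linarith
  · simp only [Fin.cons_succ]
    nlinarith [norm_le_pi_norm q i]

theorem stmt16_general (n : ℕ) (ξ : ℝ) (hξ : IsAlgebraic ℚ ξ)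
    (hdeg : (minpoly ℚ ξ).natDegree = n + 1) :
    ∃ κ : ℝ, 0 < κ ∧
      ∀ (p : ℤ) (q : Fin n → ℤ), q ≠ 0 →
        κ / ‖q‖ ^ n ≤ |∑ i, (q i : ℝ) * ξ ^ ((i : ℕ) + 1) + (p : ℝ)| := by
  have : FiniteDimensional ℚ ℚ⟮ξ⟯ := adjoin.finiteDimensional hξ.isIntegral
  have : NumberField ℚ⟮ξ⟯ := {}
  set x := AdjoinSimple.gen ℚ ξ
  set σ₀ : ℚ⟮ξ⟯ →ₐ[ℚ] ℂ := (IsScalarTower.toAlgHom ℚ ℝ ℂ).comp (ℚ⟮ξ⟯).val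
  obtain ⟨c, hc, hcv⟩ := NumberField.exists_pos_div_le_norm_embedding_sum x σ₀ n
  rw [adjoin.finrank hξ.isIntegral, hdeg, Nat.add_sub_cancel] at hcv
  set E : ℝ := ∑ i : Fin n, |ξ| ^ ((i : ℕ) + 1)
  refine ⟨min 1 (c / (1 + E) ^ n), by positivity, fun p q hq => ?_⟩
  set v : Fin (n + 1) → ℤ := Fin.cons p q
  set y : ℚ⟮ξ⟯ := ∑ j, (v j : ℚ⟮ξ⟯) * x ^ (j : ℕ)
  have hy : ‖σ₀ y‖ = |∑ i, (q i : ℝ) * ξ ^ ((i : ℕ) + 1) + (p : ℝ)| := by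
    have hyξ : (y : ℝ) = ∑ i, (q i : ℝ) * ξ ^ ((i : ℕ) + 1) + (p : ℝ) := by
      simp [y, v, x, Fin.sum_univ_succ, add_comm]
    rw [← hyξ]
    exact Complex.norm_real _
  have hv0 : v ≠ 0 := fun h => hq (funext fun i => by simpa [v] using congrFun h i.succ)
  have hy0 : y ≠ 0 := sum_intCast_mul_pow_ne_zero_of_lt_natDegree_minpoly
    (by rw [show minpoly ℚ x = minpoly ℚ ξ from minpoly_gen ℚ ξ, hdeg]; exact n.lt_succ_self) hv0
  rcases le_or_gt 1 |∑ i, (q i : ℝ) * ξ ^ ((i : ℕ) + 1) + (p : ℝ)| with hlarge | hsmall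
  · calc min 1 (c / (1 + E) ^ n) / ‖q‖ ^ n ≤ 1 / 1 := div_le_div₀ zero_le_one
          (min_le_left _ _) zero_lt_one (one_le_pow₀ (one_le_pi_norm_of_ne_zero hq))
      _ ≤ _ := by rwa [div_one]
  calc min 1 (c / (1 + E) ^ n) / ‖q‖ ^ n ≤ c / (1 + E) ^ n / ‖q‖ ^ n := by
        gcongr
        exact min_le_right _ _
    _ = c / ((1 + E) * ‖q‖) ^ n := by rw [mul_pow, div_div]
    _ ≤ c / ‖v‖ ^ n := by gcongr; exact norm_cons_le_mul_norm_of_abs_lt_one ξ p hq hsmall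
    _ ≤ ‖σ₀ y‖ := hcv v hy0
    _ = _ := hy

/-- If `ξ` is a real algebraic number of degree `n + 1` over `ℚ`, then
the point `(ξ, ξ², …, ξⁿ) ∈ ℝⁿ` is badly approximable: there exists `κ > 0` such that
`|q₁ξ + q₂ξ² + ⋯ + qₙξⁿ + p| ≥ κ / |q|_∞ⁿ` for all `p ∈ ℤ` and all
`q ∈ ℤⁿ \ {0}`. -/
theorem stmt16 (n : ℕ) (hn : 1 ≤ n) (ξ : ℝ) (hξ : IsAlgebraic ℚ ξ)
    (hdeg : (minpoly ℚ ξ).natDegree = n + 1) :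
    ∃ κ : ℝ, 0 < κ ∧
      ∀ (p : ℤ) (q : Fin n → ℤ), q ≠ 0 →
        κ / ‖q‖ ^ n ≤ |∑ i, (q i : ℝ) * ξ ^ ((i : ℕ) + 1) + (p : ℝ)| :=
  stmt16_general n ξ hξ hdeg
end

section
/- Let n, m ≥ 1 be integers. The set Bad(n,m) of badly approximable n×m real matrices, namely the set of n×m matrices Ξ with column vectors ξ_1,…,ξ_m ∈ ℝ^n such that liminf over q ∈ ℤ^n with |q|_∞ → ∞ of |q|_∞^{n/m} · min_{p ∈ ℤ^m} max_{1≤j≤m} |q_1ξ_{1,j} + … + q_nξ_{n,j} − p_j| is strictly positive, has nm-dimensional Lebesgue measure zero. -/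
/-
Up to finitely many exceptions the liminf condition is a uniform bound
`ε ≤ |q|^{n/m} ‖qΞ‖` for all `q ≠ 0`, where `‖·‖` is the sup-distance to `ℤ^m`; the exceptions
are harmless because `‖qΞ‖ > 0` for `q ≠ 0` (otherwise every multiple of `q` would violate the
bound). So `Bad(n,m)` is a countable union of the sets `Bad_ε` of matrices satisfying such a
uniform bound, and it suffices to show that each `Bad_ε` is porous: every ball `B(Ξ₀, r)` with
`Ξ₀ ∈ Bad_ε` contains a ball of proportional radius disjoint from `Bad_ε`. Dirichlet's theorem
with `Q^{n/m+1} ≍ 1/r` gives `q` with `|q| ≤ Q` and `‖qΞ₀‖ ≲ Q^{-n/m}`, and since `Ξ₀ ∈ Bad_ε`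
also `|q| ≳ Q`. Moving one row of `Ξ₀` by `‖qΞ₀‖/|q| ≲ r` gives `Ξ₁` with `qΞ₁ ∈ ℤ^m`, and near `Ξ₁`
the quantity `|q|^{n/m} ‖qΞ‖` is too small for `Ξ` to lie in `Bad_ε`. A porous set has no
Lebesgue density points, hence measure zero.
-/

open MeasureTheory Metric Filter Set Topology Module

namespace BadlyApproximable

section Porous

variable {E : Type*} [NormedAddCommGroup E] [NormedSpace ℝ E] [FiniteDimensional ℝ E]
  [MeasurableSpace E] [BorelSpace E] (μ : Measure E) [μ.IsAddHaarMeasure]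

lemma measure_inter_closedBall_le_of_disjoint {s : Set E} {x y : E} {r c : ℝ} (hr : 0 ≤ r)
    (hc : 0 ≤ c) (hsub : closedBall y (c * r) ⊆ closedBall x r)
    (hdisj : Disjoint (closedBall y (c * r)) s) :
    μ (s ∩ closedBall x r) / μ (closedBall x r) ≤ 1 - ENNReal.ofReal (c ^ finrank ℝ E) := by
  have hVtop : μ (closedBall x r) ≠ ⊤ := measure_closedBall_lt_top.ne
  have hsmall :
      μ (closedBall y (c * r)) = ENNReal.ofReal (c ^ finrank ℝ E) * μ (closedBall x r) := by
    rw [Measure.addHaar_closedBall_mul μ y hc hr, Measure.addHaar_closedBall_center μ x]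
  have hunion : μ (s ∩ closedBall x r) + μ (closedBall y (c * r)) ≤ μ (closedBall x r) := by
    rw [← measure_union (hdisj.symm.mono_left inter_subset_left) measurableSet_closedBall]
    exact measure_mono (union_subset inter_subset_right hsub)
  rw [hsmall] at hunion
  apply ENNReal.div_le_of_le_mul
  rw [ENNReal.sub_mul fun _ _ => hVtop, one_mul]
  exact ENNReal.le_sub_of_add_le_right (ENNReal.mul_ne_top ENNReal.ofReal_ne_top hVtop) hunion

theorem measure_eq_zero_of_porous {s : Set E} {c : ℝ} (hc : 0 < c)
    (hs : ∀ x ∈ s, ∀ r ∈ Ioc (0 : ℝ) 1, ∃ y,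
      closedBall y (c * r) ⊆ closedBall x r ∧ Disjoint (closedBall y (c * r)) s) :
    μ s = 0 := by
  have hlt : 1 - ENNReal.ofReal (c ^ finrank ℝ E) < 1 :=
    ENNReal.sub_lt_self ENNReal.one_ne_top one_ne_zero (by simp [hc])
  have hnot : ∀ x ∈ s, ¬ Tendsto (fun r => μ (s ∩ closedBall x r) / μ (closedBall x r))
      (𝓝[>] 0) (𝓝 1) := by
    intro x hx hlim
    refine hlt.not_ge (le_of_tendsto hlim ?_)
    filter_upwards [Ioc_mem_nhdsGT (zero_lt_one' ℝ)] with r hr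
    obtain ⟨y, hsub, hdisj⟩ := hs x hx r hr
    exact measure_inter_closedBall_le_of_disjoint μ hr.1.le hc.le hsub hdisj
  have hae : ∀ᵐ x ∂μ.restrict s, x ∉ s := by
    filter_upwards [Besicovitch.ae_tendsto_measure_inter_div μ s] with x hx hxs
    exact hnot x hxs hx
  rw [← Measure.restrict_apply_self]
  simpa using ae_iff.mp hae

end Porous

lemma exists_pos_forall_le_of_liminf_pos {α : Type*} {f : α → ℝ} {T : Set α}
    (hbdd : IsBoundedUnder (· ≥ ·) cofinite f) (hlim : 0 < liminf f cofinite)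
    (hpos : ∀ a ∈ T, 0 < f a) : ∃ δ > 0, ∀ a ∈ T, δ ≤ f a := by
  obtain ⟨ε, hε, hεlim⟩ := exists_between hlim
  have hfin : ({a | ¬ ε < f a} ∩ T).Finite :=
    (eventually_cofinite.1 (eventually_lt_of_lt_liminf hεlim hbdd)).inter_of_left T
  have hsmall : ∀ᶠ δ in 𝓝[>] (0 : ℝ), 0 < δ ∧ δ ≤ ε ∧ ∀ a ∈ {a | ¬ ε < f a} ∩ T, δ ≤ f a := by
    refine eventually_mem_nhdsWithin.and (Eventually.and ?_ ?_) <;>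
      refine Eventually.filter_mono nhdsWithin_le_nhds ?_
    · exact eventually_le_nhds hε
    · exact hfin.eventually_all.2 fun a ha => eventually_le_nhds (hpos a ha.2)
  obtain ⟨δ, hδ, hδε, hδf⟩ := hsmall.exists
  exact ⟨δ, hδ, fun a ha => if h : ε < f a then hδε.trans h.le else hδf a ⟨h, ha⟩⟩

section LatticeDist

variable {ι : Type*} [Fintype ι]

lemma ciSup_abs_eq_norm (v : ι → ℝ) : ⨆ j, |v j| = ‖v‖ := by
  cases isEmpty_or_nonempty ι
  · simp [Subsingleton.elim v 0]
  · exact (IsGreatest.pi_norm v).csSup_eq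

noncomputable def latticeDist (v : ι → ℝ) : ℝ := ‖v - fun j => (round (v j) : ℝ)‖

lemma latticeDist_nonneg (v : ι → ℝ) : 0 ≤ latticeDist v := norm_nonneg _

lemma latticeDist_le (v : ι → ℝ) (p : ι → ℤ) : latticeDist v ≤ ‖v - fun j => (p j : ℝ)‖ :=
  (pi_norm_le_iff_of_nonneg (norm_nonneg _)).2 fun j =>
    (round_le (v j) (p j)).trans (norm_le_pi_norm (v - fun j => (p j : ℝ)) j)

lemma iInf_iSup_abs_sub_intCast (v : ι → ℝ) :
    ⨅ p : ι → ℤ, ⨆ j, |v j - p j| = latticeDist v := by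
  change ⨅ p : ι → ℤ, ⨆ j, |(v - fun j => (p j : ℝ)) j| = _
  simp_rw [ciSup_abs_eq_norm]
  exact le_antisymm (ciInf_le ⟨0, by rintro _ ⟨p, rfl⟩; positivity⟩ fun j => round (v j))
    (le_ciInf (latticeDist_le v))

lemma latticeDist_zsmul_le (k : ℤ) (v : ι → ℝ) : latticeDist (k • v) ≤ |k| * latticeDist v := by
  calc latticeDist (k • v) ≤ ‖k • v - fun j => ((k * round (v j) : ℤ) : ℝ)‖ := latticeDist_le _ _
    _ = ‖k • (v - fun j => (round (v j) : ℝ))‖ := by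
      congr 1; ext j; simp [mul_sub]
    _ ≤ |k| * latticeDist v := by
      rw [latticeDist]; exact (norm_zsmul_le _ _).trans_eq (by rw [Int.norm_eq_abs, Int.cast_abs])

open Int in
lemma exists_ne_latticeDist_sub_lt {α : Type*} {s : Finset α} (f : α → ι → ℝ) {k : ℕ}
    (hk : 0 < k) (hcard : k ^ Fintype.card ι < s.card) :
    ∃ a ∈ s, ∃ b ∈ s, a ≠ b ∧ latticeDist (f a - f b) < 1 / k := by
  classical
  have hk' : (0 : ℝ) < k := by exact_mod_cast hk
  let box : α → ι → ℤ := fun a j => ⌊fract (f a j) * k⌋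
  have hmaps : Set.MapsTo box s (Fintype.piFinset fun _ : ι => Finset.Ico (0 : ℤ) k) := by
    intro a _
    simp only [box, Finset.mem_coe, Fintype.mem_piFinset, Finset.mem_Ico, floor_nonneg, floor_lt]
    exact fun j => ⟨by positivity, by
      exact_mod_cast mul_lt_of_lt_one_left hk' (fract_lt_one _)⟩
  obtain ⟨a, ha, b, hb, hab, hbox⟩ :=
    Finset.exists_ne_map_eq_of_card_lt_of_maps_to (by simpa using hcard) hmaps
  refine ⟨a, ha, b, hb, hab, ?_⟩
  calc latticeDist (f a - f b)
      ≤ ‖(f a - f b) - fun j => ((⌊f a j⌋ - ⌊f b j⌋ : ℤ) : ℝ)‖ := latticeDist_le _ _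
    _ = ‖fun j => fract (f a j) - fract (f b j)‖ := by
      congr 1; ext j; simp only [Pi.sub_apply, fract]; push_cast; ring
    _ < 1 / k := by
      refine (pi_norm_lt_iff (by positivity)).2 fun j => ?_
      have h := abs_sub_lt_one_of_floor_eq_floor (congrFun hbox j)
      rw [← sub_mul, abs_mul, abs_of_pos hk'] at h
      rw [Real.norm_eq_abs, lt_div_iff₀ hk']
      exact h

end LatticeDist

section IntVecMul

variable {ι κ : Type*} [Fintype ι]

def intVecMul (q : ι → ℤ) (Ξ : ι → κ → ℝ) : κ → ℝ := fun j => ∑ i, (q i : ℝ) * Ξ i j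

lemma intVecMul_sub_left (q₁ q₂ : ι → ℤ) (Ξ : ι → κ → ℝ) :
    intVecMul (q₁ - q₂) Ξ = intVecMul q₁ Ξ - intVecMul q₂ Ξ := by
  ext j; simp [intVecMul, sub_mul]

lemma intVecMul_sub_right (q : ι → ℤ) (Ξ Ξ' : ι → κ → ℝ) :
    intVecMul q (Ξ - Ξ') = intVecMul q Ξ - intVecMul q Ξ' := by
  ext j; simp [intVecMul, mul_sub]

lemma intVecMul_zsmul_left (k : ℤ) (q : ι → ℤ) (Ξ : ι → κ → ℝ) :
    intVecMul (k • q) Ξ = k • intVecMul q Ξ := by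
  ext j; simp [intVecMul, Finset.mul_sum, mul_assoc]

lemma intVecMul_add_single [DecidableEq ι] (q : ι → ℤ) (Ξ : ι → κ → ℝ) (i : ι) (u : κ → ℝ) :
    intVecMul q (Ξ + Pi.single i u) = intVecMul q Ξ + (q i : ℝ) • u := by
  ext j; simp [intVecMul, mul_add, Finset.sum_add_distrib, Pi.single_apply, ite_apply]

variable [Fintype κ]

lemma norm_intVecMul_le (q : ι → ℤ) (Ξ : ι → κ → ℝ) :
    ‖intVecMul q Ξ‖ ≤ Fintype.card ι * ‖q‖ * ‖Ξ‖ := by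
  refine (pi_norm_le_iff_of_nonneg (by positivity)).2 fun j => ?_
  calc ‖∑ i, (q i : ℝ) * Ξ i j‖ ≤ ∑ i, ‖q i‖ * ‖Ξ i j‖ := by
        refine (norm_sum_le _ _).trans (Finset.sum_le_sum fun i _ => ?_)
        rw [norm_mul, Int.norm_cast_real]
    _ ≤ ∑ _i : ι, ‖q‖ * ‖Ξ‖ := by
        gcongr with i
        · exact norm_le_pi_norm q i
        · exact (norm_le_pi_norm (Ξ i) j).trans (norm_le_pi_norm Ξ i)
    _ = Fintype.card ι * ‖q‖ * ‖Ξ‖ := by simp [mul_assoc]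

lemma exists_intVecMul_eq (Ξ₀ : ι → κ → ℝ) {q : ι → ℤ} (hq : q ≠ 0) (u : κ → ℝ) :
    ∃ Ξ₁, intVecMul q Ξ₁ = u ∧ ‖q‖ * dist Ξ₁ Ξ₀ = ‖u - intVecMul q Ξ₀‖ := by
  classical
  have : Nonempty ι := (Function.ne_iff.1 hq).nonempty
  obtain ⟨i, hi : ‖q i‖ = ‖q‖⟩ := (IsGreatest.pi_norm q).1
  have hqi : (q i : ℝ) ≠ 0 := by
    rw [← norm_ne_zero_iff, Int.norm_cast_real, hi]; exact norm_ne_zero_iff.2 hq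
  refine ⟨Ξ₀ + Pi.single i ((q i : ℝ)⁻¹ • (u - intVecMul q Ξ₀)), ?_, ?_⟩
  · rw [intVecMul_add_single, smul_smul, mul_inv_cancel₀ hqi, one_smul, add_sub_cancel]
  · rw [dist_eq_norm, add_sub_cancel_left, Pi.norm_single, norm_smul, norm_inv,
      Int.norm_cast_real, hi, mul_inv_cancel_left₀ (norm_ne_zero_iff.2 hq)]

lemma latticeDist_intVecMul_le {q : ι → ℤ} {Ξ Ξ₁ : ι → κ → ℝ} {p : κ → ℤ}
    (h : intVecMul q Ξ₁ = fun j => (p j : ℝ)) :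
    latticeDist (intVecMul q Ξ) ≤ Fintype.card ι * ‖q‖ * dist Ξ Ξ₁ :=
  calc latticeDist (intVecMul q Ξ) ≤ ‖intVecMul q Ξ - fun j => (p j : ℝ)‖ := latticeDist_le _ _
    _ = ‖intVecMul q (Ξ - Ξ₁)‖ := by rw [intVecMul_sub_right, h]
    _ ≤ Fintype.card ι * ‖q‖ * dist Ξ Ξ₁ := by rw [dist_eq_norm]; exact norm_intVecMul_le _ _

lemma isBoundedUnder_ge_norm_rpow_mul_latticeDist (Ξ : ι → κ → ℝ) (α : ℝ) :
    IsBoundedUnder (· ≥ ·) cofinite fun q : ι → ℤ => ‖q‖ ^ α * latticeDist (intVecMul q Ξ) :=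
  isBoundedUnder_of ⟨0, fun q => mul_nonneg (Real.rpow_nonneg (norm_nonneg q) α)
    (latticeDist_nonneg _)⟩

lemma latticeDist_intVecMul_pos_of_liminf_pos {Ξ : ι → κ → ℝ} {α : ℝ}
    (hΞ : 0 < liminf (fun q : ι → ℤ => ‖q‖ ^ α * latticeDist (intVecMul q Ξ)) cofinite)
    {q : ι → ℤ} (hq : q ≠ 0) : 0 < latticeDist (intVecMul q Ξ) := by
  refine (latticeDist_nonneg _).lt_of_ne' fun h0 => hΞ.not_ge (liminf_le_of_frequently_le ?_ ?_)
  · rw [frequently_cofinite_iff_infinite]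
    refine (Set.infinite_range_of_injective (smul_left_injective ℤ hq)).mono ?_
    rintro _ ⟨k, rfl⟩
    have := latticeDist_zsmul_le k (intVecMul q Ξ)
    rw [h0, mul_zero] at this
    show ‖k • q‖ ^ α * latticeDist (intVecMul (k • q) Ξ) ≤ 0
    rw [intVecMul_zsmul_left, le_antisymm this (latticeDist_nonneg _), mul_zero]
  · exact isBoundedUnder_ge_norm_rpow_mul_latticeDist Ξ α

end IntVecMul

section Dirichlet

variable {n m : ℕ}

lemma rpow_div_pow_eq {x : ℝ} (hx : 0 ≤ x) (hm : 0 < m) :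
    (x ^ ((n : ℝ) / m)) ^ m = x ^ n := by
  rw [← Real.rpow_natCast, ← Real.rpow_mul hx, div_mul_cancel₀ _ (by positivity),
    Real.rpow_natCast]

lemma half_le_natFloor {x : ℝ} (hx : 1 ≤ x) : x / 2 ≤ ⌊x⌋₊ := by
  have h1 : (1 : ℝ) ≤ ⌊x⌋₊ := by exact_mod_cast Nat.le_floor (by exact_mod_cast hx)
  linarith [Nat.sub_one_lt_floor x]

theorem exists_intVecMul_latticeDist_le (hn : 0 < n) (hm : 0 < m) (Ξ : Fin n → Fin m → ℝ)
    {Q : ℝ} (hQ : 1 ≤ Q) :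
    ∃ q : Fin n → ℤ, q ≠ 0 ∧ ‖q‖ ≤ Q ∧ Q ^ ((n : ℝ) / m) * latticeDist (intVecMul q Ξ) ≤ 2 := by
  set N := ⌊Q⌋₊
  set k := ⌊Q ^ ((n : ℝ) / m)⌋₊
  have hQα : 1 ≤ Q ^ ((n : ℝ) / m) := Real.one_le_rpow hQ (by positivity)
  have hk : 0 < k := Nat.floor_pos.2 hQα
  have hcard : k ^ m < (N + 1) ^ n := by
    have h : (k : ℝ) ^ m < ((N : ℝ) + 1) ^ n := calc
      (k : ℝ) ^ m ≤ (Q ^ ((n : ℝ) / m)) ^ m := by gcongr; exact Nat.floor_le (by positivity)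
      _ = Q ^ n := rpow_div_pow_eq (by positivity) hm
      _ < ((N : ℝ) + 1) ^ n := by gcongr; exact Nat.lt_floor_add_one Q
    exact_mod_cast h
  let box : Finset (Fin n → ℤ) := Fintype.piFinset fun _ => Finset.Icc 0 (N : ℤ)
  obtain ⟨a, ha, b, hb, hab, hlt⟩ :=
    exists_ne_latticeDist_sub_lt (s := box) (fun q => intVecMul q Ξ) hk (by simpa [box] using hcard)
  refine ⟨a - b, sub_ne_zero.2 hab, ?_, ?_⟩
  · refine (pi_norm_le_iff_of_nonneg (by positivity)).2 fun i => ?_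
    have hai := Finset.mem_Icc.1 (Fintype.mem_piFinset.1 ha i)
    have hbi := Finset.mem_Icc.1 (Fintype.mem_piFinset.1 hb i)
    have : |a i - b i| ≤ N := abs_sub_le_iff.2 ⟨by omega, by omega⟩
    calc ‖(a - b) i‖ = ((|a i - b i| : ℤ) : ℝ) := by simp [Int.norm_eq_abs]
      _ ≤ N := by exact_mod_cast this
      _ ≤ Q := Nat.floor_le (by positivity)
  · rw [intVecMul_sub_left]
    have hk' : (0 : ℝ) < k := by exact_mod_cast hk
    calc Q ^ ((n : ℝ) / m) * latticeDist (intVecMul a Ξ - intVecMul b Ξ)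
        ≤ Q ^ ((n : ℝ) / m) * (1 / k) := by gcongr
      _ ≤ 2 := by
        rw [mul_one_div, div_le_iff₀ hk']
        linarith [half_le_natFloor hQα]

end Dirichlet

section BadSet

variable {n m : ℕ}

def badSet (n m : ℕ) (ε : ℝ) : Set (Fin n → Fin m → ℝ) :=
  {Ξ | ∀ q : Fin n → ℤ, q ≠ 0 → ε ≤ ‖q‖ ^ ((n : ℝ) / m) * latticeDist (intVecMul q Ξ)}

lemma badSet_anti : Antitone (badSet n m) := fun _ _ h _ hΞ q hq => h.trans (hΞ q hq)

lemma mul_le_norm_of_mem_badSet (hn : 0 < n) (hm : 0 < m) {ε : ℝ} (hε : 0 ≤ ε)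
    {Ξ : Fin n → Fin m → ℝ} (hΞ : Ξ ∈ badSet n m ε) {q : Fin n → ℤ} (hq : q ≠ 0) {Q : ℝ}
    (hQ : 0 ≤ Q) (hD : Q ^ ((n : ℝ) / m) * latticeDist (intVecMul q Ξ) ≤ 2) :
    (ε / 2) ^ ((n : ℝ) / m)⁻¹ * Q ≤ ‖q‖ := by
  have hα : 0 < (n : ℝ) / m := by positivity
  have h : ε / 2 * Q ^ ((n : ℝ) / m) ≤ ‖q‖ ^ ((n : ℝ) / m) := by
    have := mul_le_mul_of_nonneg_right (hΞ q hq) (by positivity : 0 ≤ Q ^ ((n : ℝ) / m))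
    nlinarith [mul_le_mul_of_nonneg_left hD (by positivity : 0 ≤ ‖q‖ ^ ((n : ℝ) / m))]
  rwa [← Real.rpow_le_rpow_iff (by positivity) (norm_nonneg q) hα, Real.mul_rpow (by positivity) hQ,
    Real.rpow_inv_rpow (by positivity) hα.ne']

lemma badSet_porous (hn : 0 < n) (hm : 0 < m) {ε : ℝ} (hε : 0 < ε) (hε1 : ε ≤ 1) :
    ∃ c > 0, ∀ Ξ₀ ∈ badSet n m ε, ∀ r ∈ Ioc (0 : ℝ) 1, ∃ Ξ₁,
      closedBall Ξ₁ (c * r) ⊆ closedBall Ξ₀ r ∧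
        Disjoint (closedBall Ξ₁ (c * r)) (badSet n m ε) := by
  set α : ℝ := (n : ℝ) / m
  have hα : 0 < α := by positivity
  set β := (ε / 2) ^ α⁻¹
  have hβ : 0 < β := by positivity
  have hβ1 : β ≤ 1 := Real.rpow_le_one (by positivity) (by linarith) (by positivity)
  refine ⟨ε * β / (8 * n), by positivity, fun Ξ₀ hΞ₀ r ⟨hr, hr1⟩ => ?_⟩
  -- `Q ^ (α + 1) = 4 / (β r)` makes the correction `Ξ₁ - Ξ₀` at most `r / 2`, and keeps
  -- `‖q‖ ^ α * latticeDist (intVecMul q Ξ) ≤ ε / 2` on the ball of radius `c r` around `Ξ₁`.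
  set Q := (4 / (β * r)) ^ (α + 1)⁻¹
  have hQ : 1 ≤ Q := Real.one_le_rpow
    ((one_le_div (by positivity)).2 (by nlinarith)) (by positivity)
  have hQα : Q ^ α * Q = 4 / (β * r) := by
    rw [← Real.rpow_add_one (by positivity), Real.rpow_inv_rpow (by positivity) (by positivity)]
  obtain ⟨q, hq, hqQ, hD⟩ := exists_intVecMul_latticeDist_le hn hm Ξ₀ hQ
  have hβq : β * Q ≤ ‖q‖ := mul_le_norm_of_mem_badSet hn hm hε.le hΞ₀ hq (by positivity) hD
  obtain ⟨Ξ₁, hΞ₁, hdist⟩ := exists_intVecMul_eq Ξ₀ hq fun j => (round (intVecMul q Ξ₀ j) : ℝ)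
  rw [norm_sub_rev] at hdist
  have hclose : dist Ξ₁ Ξ₀ ≤ r / 2 := by
    have : β * (Q ^ α * Q) * dist Ξ₁ Ξ₀ ≤ 2 := calc
      β * (Q ^ α * Q) * dist Ξ₁ Ξ₀ = Q ^ α * (β * Q * dist Ξ₁ Ξ₀) := by ring
      _ ≤ Q ^ α * (‖q‖ * dist Ξ₁ Ξ₀) := by gcongr
      _ ≤ 2 := by rw [hdist]; exact hD
    rw [hQα, show β * (4 / (β * r)) = 4 / r by field_simp, div_mul_eq_mul_div,
      div_le_iff₀ hr] at this
    linarith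
  refine ⟨Ξ₁, closedBall_subset_closedBall' ?_, Set.disjoint_left.2 fun Ξ hΞ hbad => ?_⟩
  · nlinarith [show ε * β / (8 * n) ≤ 1 / 2 from by
      rw [div_le_iff₀ (by positivity)]; nlinarith [(show (1 : ℝ) ≤ n by exact_mod_cast hn)]]
  · have hΞq := latticeDist_intVecMul_le (Ξ := Ξ) hΞ₁
    rw [Fintype.card_fin] at hΞq
    have : ε ≤ ε / 2 := calc
      ε ≤ ‖q‖ ^ α * latticeDist (intVecMul q Ξ) := hbad q hq
      _ ≤ ‖q‖ ^ α * (n * ‖q‖ * (ε * β / (8 * n) * r)) := by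
        gcongr
        exact hΞq.trans (by gcongr; exact mem_closedBall.1 hΞ)
      _ = n * (ε * β / (8 * n) * r) * (‖q‖ ^ α * ‖q‖) := by ring
      _ ≤ n * (ε * β / (8 * n) * r) * (Q ^ α * Q) := by gcongr
      _ = ε / 2 := by rw [hQα]; field_simp; ring
    linarith

theorem volume_badSet_eq_zero (hn : 0 < n) (hm : 0 < m) {ε : ℝ} (hε : 0 < ε) (hε1 : ε ≤ 1) :
    volume (badSet n m ε) = 0 :=
  let ⟨_, hc, hporous⟩ := badSet_porous hn hm hε hε1
  measure_eq_zero_of_porous volume hc hporous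

lemma exists_pos_mem_badSet {Ξ : Fin n → Fin m → ℝ}
    (hΞ : 0 < liminf (fun q : Fin n → ℤ => ‖q‖ ^ ((n : ℝ) / m) * latticeDist (intVecMul q Ξ))
      cofinite) :
    ∃ ε > 0, Ξ ∈ badSet n m ε :=
  exists_pos_forall_le_of_liminf_pos (isBoundedUnder_ge_norm_rpow_mul_latticeDist Ξ _) hΞ
    fun _ hq => mul_pos (Real.rpow_pos_of_pos (norm_pos_iff.2 hq) _)
      (latticeDist_intVecMul_pos_of_liminf_pos hΞ hq)

end BadSet

end BadlyApproximable

open BadlyApproximable in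
/-- The set `Bad(n,m)` of badly approximable `n × m` real matrices,
i.e. those `Ξ` with columns `ξ₁, …, ξ_m ∈ ℝ^n` for which
`liminf_{q ∈ ℤⁿ, |q|_∞ → ∞} |q|_∞^{n/m} · min_{p ∈ ℤ^m} max_{1≤j≤m} |q·ξ_j − p_j| > 0`,
has `nm`-dimensional Lebesgue measure zero.  (The liminf as `|q|_∞ → ∞` is taken along
the cofinite filter on `ℤⁿ`.) -/
theorem stmt18 (n m : ℕ) (hn : 1 ≤ n) (hm : 1 ≤ m) :
    volume {Ξ : Fin n → Fin m → ℝ |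
      0 < Filter.liminf (fun q : Fin n → ℤ =>
            ‖q‖ ^ ((n : ℝ) / (m : ℝ)) *
              ⨅ p : Fin m → ℤ, ⨆ j : Fin m, |∑ i, (q i : ℝ) * Ξ i j - (p j : ℝ)|)
          Filter.cofinite} = 0 := by
  simp_rw [iInf_iSup_abs_sub_intCast]
  refine measure_mono_null (t := ⋃ k : ℕ, badSet n m (1 / (k + 1))) ?_
    (measure_iUnion_null fun k => volume_badSet_eq_zero hn hm (by positivity)
      (div_le_one_of_le₀ (le_add_of_nonneg_left k.cast_nonneg) (by positivity)))
  intro Ξ hΞ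
  obtain ⟨ε, hε, hΞε⟩ := exists_pos_mem_badSet hΞ
  obtain ⟨k, hk⟩ := exists_nat_one_div_lt hε
  exact mem_iUnion.2 ⟨k, badSet_anti hk.le hΞε⟩
end
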